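/- arXiv:2505.24815 — 11 statements merged into one kernel-verified Lean document; each statement's English description precedes it below -/
import Mathlib

section
/- Let (Ω, 𝓕, ℙ) be a probability space and 𝔷 = (𝔷_1, …, 𝔷_n) : Ω → ℝⁿ a square-integrable random vector with mean vector μ ∈ ℝⁿ (E[𝔷_i] = μ_i) and covariance matrix Σ ∈ ℝ^{n×n} (E[(𝔷_i − μ_i)(𝔷_j − μ_j)] = Σ_{ij}). Let r ∈ ℝⁿ, a ∈ ℝ and p ∈ (0,1). If rᵀμ + √(p/(1−p)) · √(rᵀΣr) ≤ a, then ℙ(rᵀ𝔷 ≤ a) ≥ p. -/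
open MeasureTheory

lemma integrable_mul_of_memL2 {Ω : Type*} [MeasurableSpace Ω] {P : Measure Ω}
    {f g : Ω → ℝ} (hf : MemLp f 2 P) (hg : MemLp g 2 P) :
    Integrable (fun ω => f ω * g ω) P := by
  refine Integrable.mono' (hf.integrable_sq.add hg.integrable_sq)
    (hf.aestronglyMeasurable.mul hg.aestronglyMeasurable) ?_
  filter_upwards with x
  simp only [Pi.add_apply]
  have habs : ‖f x * g x‖ = |f x| * |g x| := by rw [Real.norm_eq_abs, abs_mul]
  rw [habs]
  nlinarith [sq_nonneg (|f x| - |g x|), abs_nonneg (f x), abs_nonneg (g x),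
    sq_abs (f x), sq_abs (g x)]

set_option maxHeartbeats 1000000 in
/-- One-sided Chebyshev (Cantelli) inner approximation of a linear chance constraint. -/
theorem onesided_chebyshev_chance_constraint
    {Ω : Type*} [MeasurableSpace Ω] (P : Measure Ω) [IsProbabilityMeasure P]
    {n : ℕ} (z : Ω → Fin n → ℝ)
    (hz2 : ∀ i, MemLp (fun ω => z ω i) 2 P)
    (μ : Fin n → ℝ) (hμ : ∀ i, ∫ ω, z ω i ∂P = μ i)
    (Cov : Matrix (Fin n) (Fin n) ℝ)
    (hCov : ∀ i j, ∫ ω, (z ω i - μ i) * (z ω j - μ j) ∂P = Cov i j)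
    (r : Fin n → ℝ) (a p : ℝ) (hp : p ∈ Set.Ioo (0 : ℝ) 1)
    (hineq : ∑ i, r i * μ i +
      Real.sqrt (p / (1 - p)) * Real.sqrt (∑ i, ∑ j, r i * Cov i j * r j) ≤ a) :
    p ≤ (P {ω | ∑ i, r i * z ω i ≤ a}).toReal := by
  obtain ⟨hp0, hp1⟩ := hp
  set m : ℝ := ∑ i, r i * μ i with hm
  set Y : Ω → ℝ := fun ω => ∑ i, r i * (z ω i - μ i) with hYdef
  set t : ℝ := a - m with ht
  set v : ℝ := ∑ i, ∑ j, r i * Cov i j * r j with hv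
  clear_value m Y t v
  -- membership / integrability
  have hg2 : ∀ i, MemLp (fun ω => z ω i - μ i) 2 P := fun i =>
    (hz2 i).sub (memLp_const _)
  have hY2 : MemLp Y 2 P := by
    rw [hYdef]
    exact memLp_finset_sum Finset.univ (fun i _ => (hg2 i).const_mul (r i))
  have hYint : Integrable Y P := hY2.integrable one_le_two
  -- mean of Y is 0
  have hgint : ∀ i, Integrable (fun ω => z ω i - μ i) P :=
    fun i => (hg2 i).integrable one_le_two
  have hYmean : ∫ ω, Y ω ∂P = 0 := by
    rw [hYdef]
    rw [integral_finset_sum _ (fun i _ => ((hgint i).const_mul (r i)))]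
    have : ∀ i, ∫ ω, r i * (z ω i - μ i) ∂P = 0 := by
      intro i
      rw [integral_const_mul, integral_sub ((hz2 i).integrable one_le_two) (integrable_const _),
        hμ i, integral_const]
      simp
    simp [this]
  -- second moment of Y is v
  have hYsqint : Integrable (fun ω => Y ω ^ 2) P := hY2.integrable_sq
  have hYvar : ∫ ω, Y ω ^ 2 ∂P = v := by
    have hexp : ∀ ω, Y ω ^ 2 =
        ∑ i, ∑ j, (r i * (z ω i - μ i)) * (r j * (z ω j - μ j)) := by
      intro ω
      rw [sq, hYdef, Finset.sum_mul_sum]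
    have hint : ∀ i j, Integrable
        (fun ω => (r i * (z ω i - μ i)) * (r j * (z ω j - μ j))) P := by
      intro i j
      have := (integrable_mul_of_memL2 (hg2 i) (hg2 j)).const_mul (r i * r j)
      refine this.congr (Filter.Eventually.of_forall fun ω => ?_)
      ring
    calc ∫ ω, Y ω ^ 2 ∂P
        = ∫ ω, ∑ i, ∑ j, (r i * (z ω i - μ i)) * (r j * (z ω j - μ j)) ∂P := by
          simp only [hexp]
      _ = ∑ i, ∑ j, ∫ ω, (r i * (z ω i - μ i)) * (r j * (z ω j - μ j)) ∂P := by
          rw [integral_finset_sum _ (fun i _ => integrable_finset_sum _ (fun j _ => hint i j))]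
          exact Finset.sum_congr rfl fun i _ =>
            integral_finset_sum _ (fun j _ => hint i j)
      _ = v := by
          rw [hv]
          refine Finset.sum_congr rfl fun i _ => Finset.sum_congr rfl fun j _ => ?_
          have : ∀ ω, (r i * (z ω i - μ i)) * (r j * (z ω j - μ j)) =
              (r i * r j) * ((z ω i - μ i) * (z ω j - μ j)) := fun ω => by ring
          simp only [this]
          rw [integral_const_mul, hCov i j]; ring
  have hv0 : 0 ≤ v := hYvar ▸ integral_nonneg (fun ω => sq_nonneg _)
  -- key inequality: √(p/(1-p)) √v ≤ t
  have h1p : 0 < 1 - p := by linarith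
  have hpq : 0 ≤ p / (1 - p) := div_nonneg hp0.le h1p.le
  have hc : Real.sqrt (p / (1 - p)) * Real.sqrt v ≤ t := by
    rw [ht]; linarith [hineq]
  have ht0 : 0 ≤ t := le_trans (mul_nonneg (Real.sqrt_nonneg _) (Real.sqrt_nonneg _)) hc
  -- t² (1-p) ≥ p v
  have hkey : p * v ≤ (1 - p) * t ^ 2 := by
    have h1 : Real.sqrt (p / (1 - p)) * Real.sqrt v = Real.sqrt (p / (1 - p) * v) :=
      (Real.sqrt_mul hpq v).symm
    have h2 : p / (1 - p) * v ≤ t ^ 2 := by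
      have h3 : Real.sqrt (p / (1 - p) * v) ≤ t := h1 ▸ hc
      calc p / (1 - p) * v = Real.sqrt (p / (1 - p) * v) ^ 2 :=
            (Real.sq_sqrt (mul_nonneg hpq hv0)).symm
        _ ≤ t ^ 2 := by nlinarith [Real.sqrt_nonneg (p / (1 - p) * v)]
    rw [div_mul_eq_mul_div, div_le_iff₀ h1p] at h2
    linarith
  -- rewrite the goal set in terms of Y
  have hYalt : ∀ ω, Y ω = (∑ i, r i * z ω i) - m := by
    intro ω
    simp only [hYdef]
    rw [hm, ← Finset.sum_sub_distrib]
    exact Finset.sum_congr rfl fun i _ => by ring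
  have hset : {ω | ∑ i, r i * z ω i ≤ a} = {ω | Y ω ≤ t} := by
    ext ω
    simp only [Set.mem_setOf_eq, hYalt ω, ht]
    constructor <;> intro h <;> linarith
  rw [hset]
  -- null measurability
  have hYae : AEMeasurable Y P := hY2.aestronglyMeasurable.aemeasurable
  have hns : NullMeasurableSet {ω | Y ω ≤ t} P :=
    hYae.nullMeasurable measurableSet_Iic
  -- split on v = 0
  rcases eq_or_lt_of_le hv0 with hveq | hvpos
  · -- v = 0 : Y = 0 a.e.
    have hY0 : ∀ᵐ ω ∂P, Y ω ^ 2 = 0 := by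
      have : ∫ ω, Y ω ^ 2 ∂P = 0 := by rw [hYvar, ← hveq]
      exact (integral_eq_zero_iff_of_nonneg (fun ω => sq_nonneg _) hYsqint).mp this
    have hfull : ∀ᵐ ω ∂P, ω ∈ {ω | Y ω ≤ t} := by
      filter_upwards [hY0] with ω hω
      have : Y ω = 0 := by nlinarith
      simp only [Set.mem_setOf_eq, this]; exact ht0
    have h0 : P {ω | ¬ Y ω ≤ t} = 0 := by
      rw [← ae_iff]
      filter_upwards [hfull] with ω hω using hω
    have h1 : P {ω | Y ω ≤ t} = 1 := by
      have h2 := measure_add_measure_compl₀ hns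
      rw [measure_univ] at h2
      have hcomp : {ω | Y ω ≤ t}ᶜ = {ω | ¬ Y ω ≤ t} := rfl
      rw [hcomp, h0, add_zero] at h2
      exact h2
    rw [h1]; simp; linarith
  · -- v > 0, Cantelli argument
    have htpos : 0 < t := by
      have hsv : 0 < Real.sqrt v := Real.sqrt_pos.mpr hvpos
      have hsp : 0 < Real.sqrt (p / (1 - p)) := Real.sqrt_pos.mpr (by
        apply div_pos hp0; linarith)
      exact lt_of_lt_of_le (mul_pos hsp hsv) hc
    set u : ℝ := v / t with hu
    clear_value u
    have hupos : 0 < u := hu ▸ div_pos hvpos htpos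
    -- Markov on (Y + u)^2
    have hfint : Integrable (fun ω => (Y ω + u) ^ 2) P := by
      have : ∀ ω, (Y ω + u) ^ 2 = Y ω ^ 2 + 2 * u * Y ω + u ^ 2 := fun ω => by ring
      simp only [this]
      exact (hYsqint.add (hYint.const_mul (2 * u))).add (integrable_const _)
    have hfval : ∫ ω, (Y ω + u) ^ 2 ∂P = v + u ^ 2 := by
      have : ∀ ω, (Y ω + u) ^ 2 = Y ω ^ 2 + 2 * u * Y ω + u ^ 2 := fun ω => by ring
      simp only [this]
      have hA : Integrable (fun ω => Y ω ^ 2 + 2 * u * Y ω) P :=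
        hYsqint.add (hYint.const_mul (2 * u))
      have hB : Integrable (fun ω => 2 * u * Y ω) P := hYint.const_mul (2 * u)
      rw [integral_add hA (integrable_const _), integral_add hYsqint hB,
        integral_const_mul, hYmean, hYvar, integral_const]
      simp
    have hmarkov := mul_meas_ge_le_integral_of_nonneg
      (Filter.Eventually.of_forall fun ω => sq_nonneg (Y ω + u)) hfint ((t + u) ^ 2)
    rw [hfval] at hmarkov
    -- {Y > t} ⊆ {(t+u)^2 ≤ (Y+u)^2}
    have hsub : {ω | t < Y ω} ⊆ {ω | (t + u) ^ 2 ≤ (Y ω + u) ^ 2} := by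
      intro ω hω
      simp only [Set.mem_setOf_eq] at hω ⊢
      nlinarith
    have hPgt : (P {ω | t < Y ω}).toReal ≤ (v + u ^ 2) / (t + u) ^ 2 := by
      have h1 : P {ω | t < Y ω} ≤ P {ω | (t + u) ^ 2 ≤ (Y ω + u) ^ 2} :=
        measure_mono hsub
      have h2 : (P {ω | t < Y ω}).toReal ≤
          (P {ω | (t + u) ^ 2 ≤ (Y ω + u) ^ 2}).toReal :=
        ENNReal.toReal_mono (measure_ne_top _ _) h1
      have htu : (0:ℝ) < (t + u) ^ 2 := by positivity
      rw [le_div_iff₀ htu]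
      calc (P {ω | t < Y ω}).toReal * (t + u) ^ 2
          ≤ (P {ω | (t + u) ^ 2 ≤ (Y ω + u) ^ 2}).toReal * (t + u) ^ 2 := by
            exact mul_le_mul_of_nonneg_right h2 (le_of_lt htu)
        _ = (t + u) ^ 2 * (P {ω | (t + u) ^ 2 ≤ (Y ω + u) ^ 2}).toReal := by ring
        _ ≤ v + u ^ 2 := hmarkov
    -- complement relation
    have hcompl : (P {ω | Y ω ≤ t}).toReal = 1 - (P {ω | t < Y ω}).toReal := by
      have hns' : NullMeasurableSet {ω | t < Y ω} P :=
        hYae.nullMeasurable measurableSet_Ioi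
      have : {ω | t < Y ω}ᶜ = {ω | Y ω ≤ t} := by
        ext ω; simp [not_lt]
      rw [← this, prob_compl_eq_one_sub₀ hns']
      rw [ENNReal.toReal_sub_of_le (prob_le_one) (by simp)]
      simp
    rw [hcompl]
    -- final: 1 - (v+u²)/(t+u)² = t²/(v+t²) ≥ p
    have htu2 : (0:ℝ) < (t + u) ^ 2 := by positivity
    have hbound : (v + u ^ 2) / (t + u) ^ 2 ≤ 1 - p := by
      rw [div_le_iff₀ htu2]
      have huv : u * t = v := by
        rw [hu]; exact div_mul_cancel₀ v (ne_of_gt htpos)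
      have e1 : (t + u) ^ 2 = t ^ 2 + 2 * v + u ^ 2 := by
        have : (t + u) ^ 2 = t ^ 2 + 2 * (u * t) + u ^ 2 := by ring
        rw [this, huv]
      have e3 : p * u ^ 2 * t ^ 2 = p * v * v := by
        rw [← huv]; ring
      have e4 : p * v * v ≤ ((1 - p) * v) * t ^ 2 := by
        have := mul_le_mul_of_nonneg_right hkey (le_of_lt hvpos)
        nlinarith [this]
      have e5 : p * u ^ 2 ≤ (1 - p) * v := by
        have h2 : p * u ^ 2 * t ^ 2 ≤ ((1 - p) * v) * t ^ 2 := by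
          rw [e3]; exact e4
        exact le_of_mul_le_mul_right h2 (by positivity)
      rw [e1]
      nlinarith [hkey, e5]
    linarith [hPgt]
end

section
/- Let (Ω, 𝓕, ℙ) be a probability space and 𝔷 = (𝔷_1, …, 𝔷_n) : Ω → ℝⁿ a random vector whose components 𝔷_1, …, 𝔷_n are independent, with mean vector μ ∈ ℝⁿ, and almost surely 𝔷_i^l ≤ 𝔷_i ≤ 𝔷_i^u for each i. Let r ∈ ℝⁿ with r ≥ 0 componentwise, a ∈ ℝ and p ∈ (0,1). If rᵀμ + √(−(1/2)·ln(1−p)) · √(Σ_{i=1}^n r_i² (𝔷_i^u − 𝔷_i^l)²) ≤ a, then ℙ(rᵀ𝔷 ≤ a) ≥ p. -/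
open MeasureTheory ProbabilityTheory
open Real
open scoped NNReal

section Helpers

lemma hoeffding_core {θ : ℝ} (h0 : 0 ≤ θ) (h1 : θ ≤ 1) (h : ℝ) :
    (1 - θ) + θ * exp h ≤ exp (θ * h + h ^ 2 / 8) := by
  set D : ℝ → ℝ := fun x => 1 - θ + θ * exp x with hD
  have hDpos : ∀ x, 0 < D x := by
    intro x
    rcases eq_or_lt_of_le h0 with h' | h'
    · simp [hD, ← h']
    · have := exp_pos x
      have : 0 < θ * exp x := mul_pos h' this
      simp only [hD]; linarith
  have hDd : ∀ x, HasDerivAt D (θ * exp x) x := by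
    intro x
    exact ((Real.hasDerivAt_exp x).const_mul θ).const_add (1 - θ)
  set g : ℝ → ℝ := fun x => θ * exp x / D x with hg
  have hgd : ∀ x, HasDerivAt g ((θ * exp x * D x - θ * exp x * (θ * exp x)) / (D x) ^ 2) x := by
    intro x
    exact ((Real.hasDerivAt_exp x).const_mul θ).div (hDd x) (hDpos x).ne'
  have hgderiv : ∀ x, deriv g x = (θ * exp x * D x - θ * exp x * (θ * exp x)) / (D x) ^ 2 :=
    fun x => (hgd x).deriv
  have hglip : LipschitzWith (1/4 : ℝ≥0) g := by
    apply lipschitzWith_of_nnnorm_deriv_le (fun x => (hgd x).differentiableAt)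
    intro x
    rw [← NNReal.coe_le_coe, coe_nnnorm, hgderiv x, Real.norm_eq_abs]
    have hA : 0 ≤ θ * exp x := mul_nonneg h0 (exp_pos x).le
    have hB : (0:ℝ) ≤ 1 - θ := by linarith
    have hDx : D x = θ * exp x + (1 - θ) := by simp [hD]; ring
    have hDp := hDpos x
    rw [abs_div, abs_of_nonneg (by nlinarith [sq_nonneg (D x)] : (0:ℝ) ≤ θ * exp x * D x - θ * exp x * (θ * exp x)), abs_of_nonneg (sq_nonneg (D x))]
    rw [div_le_iff₀ (by positivity)]
    push_cast
    nlinarith [sq_nonneg (θ * exp x - (1 - θ))]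
  have hg0 : g 0 = θ := by
    simp only [hg, hD, Real.exp_zero, mul_one]
    field_simp
    ring
  have hgbound : ∀ x, |g x - θ| ≤ |x| / 4 := by
    intro x
    have := hglip.dist_le_mul x 0
    rw [Real.dist_eq, Real.dist_eq, hg0] at this
    simpa [div_eq_inv_mul] using this
  set ψ : ℝ → ℝ := fun x => θ * x + x ^ 2 / 8 - Real.log (D x) with hψ
  have hψd : ∀ x, HasDerivAt ψ (θ + x / 4 - g x) x := by
    intro x
    have h1' : HasDerivAt (fun x : ℝ => θ * x + x ^ 2 / 8) (θ + x / 4) x := by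
      have := ((hasDerivAt_pow 2 x).div_const 8).const_add 0
      have h2' : HasDerivAt (fun x : ℝ => θ * x) θ x := by
        simpa using (hasDerivAt_id x).const_mul θ
      have h3' : HasDerivAt (fun x : ℝ => x ^ 2 / 8) ((2 * x ^ 1) / 8) x :=
        (hasDerivAt_pow 2 x).div_const 8
      exact (h2'.add h3').congr_deriv (by ring)
    have h2' : HasDerivAt (fun x => Real.log (D x)) (θ * exp x / D x) x :=
      (hDd x).log (hDpos x).ne'
    exact h1'.sub h2'
  have hψ0 : ψ 0 = 0 := by simp [hψ, hD]
  have hψderiv : ∀ x, deriv ψ x = θ + x / 4 - g x := fun x => (hψd x).deriv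
  have hψcont : Continuous ψ := by
    have : Differentiable ℝ ψ := fun x => (hψd x).differentiableAt
    exact this.continuous
  have key : 0 ≤ ψ h := by
    rcases le_or_gt 0 h with hh | hh
    · have hmono : MonotoneOn ψ (Set.Icc 0 h) := by
        apply monotoneOn_of_deriv_nonneg (convex_Icc 0 h) hψcont.continuousOn
          (fun x _ => ((hψd x).differentiableAt.differentiableWithinAt))
        intro x hx
        rw [interior_Icc] at hx
        rw [hψderiv x]
        have := hgbound x
        have hx0 : 0 ≤ x := le_of_lt hx.1
        rw [abs_of_nonneg hx0] at this
        have := abs_le.mp this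
        linarith [this.2]
      have := hmono (Set.left_mem_Icc.2 hh) (Set.right_mem_Icc.2 hh) hh
      linarith [hψ0 ▸ this]
    · have hmono : AntitoneOn ψ (Set.Icc h 0) := by
        apply antitoneOn_of_deriv_nonpos (convex_Icc h 0) hψcont.continuousOn
          (fun x _ => ((hψd x).differentiableAt.differentiableWithinAt))
        intro x hx
        rw [interior_Icc] at hx
        rw [hψderiv x]
        have := hgbound x
        have hx0 : x ≤ 0 := le_of_lt hx.2
        rw [abs_of_nonpos hx0] at this
        have := abs_le.mp this
        linarith [this.1]
      have := hmono (Set.left_mem_Icc.2 hh.le) (Set.right_mem_Icc.2 hh.le) hh.le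
      linarith [hψ0 ▸ this]
  have hlog : Real.log (D h) ≤ θ * h + h ^ 2 / 8 := by
    simp only [hψ] at key; linarith
  calc (1 - θ) + θ * exp h = D h := by simp [hD]
    _ ≤ exp (θ * h + h ^ 2 / 8) := by
        rw [← Real.exp_log (hDpos h)]
        exact Real.exp_le_exp.2 hlog

variable {Ω : Type*} [MeasurableSpace Ω] (P : Measure Ω) [IsProbabilityMeasure P]

lemma integrable_exp_bdd {X : Ω → ℝ} (hX : Measurable X) {l u : ℝ}
    (hb : ∀ᵐ ω ∂P, X ω ∈ Set.Icc l u) (t : ℝ) :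
    Integrable (fun ω => exp (t * X ω)) P := by
  refine Integrable.mono' (integrable_const (max (exp (t * l)) (exp (t * u))))
    ((hX.const_mul t).exp.aestronglyMeasurable) ?_
  filter_upwards [hb] with ω hω
  rw [Real.norm_eq_abs, abs_of_pos (exp_pos _)]
  rcases le_or_gt 0 t with ht | ht
  · exact le_trans (exp_le_exp.2 (mul_le_mul_of_nonneg_left hω.2 ht)) (le_max_right _ _)
  · exact le_trans (exp_le_exp.2 (by nlinarith [hω.1])) (le_max_left _ _)

lemma integrable_bdd {X : Ω → ℝ} (hX : Measurable X) {l u : ℝ}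
    (hb : ∀ᵐ ω ∂P, X ω ∈ Set.Icc l u) : Integrable X P := by
  refine Integrable.mono' (integrable_const (max |l| |u|)) hX.aestronglyMeasurable ?_
  filter_upwards [hb] with ω hω
  rw [Real.norm_eq_abs, abs_le]
  constructor
  · have := neg_abs_le l; linarith [hω.1, le_max_left |l| |u|]
  · linarith [hω.2, le_abs_self u, le_max_right |l| |u|]

lemma mean_mem_Icc {X : Ω → ℝ} (hX : Measurable X) {l u : ℝ}
    (hb : ∀ᵐ ω ∂P, X ω ∈ Set.Icc l u) : (∫ ω, X ω ∂P) ∈ Set.Icc l u := by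
  have hint := integrable_bdd P hX hb
  constructor
  · have := integral_mono_ae (integrable_const l) hint
      (by filter_upwards [hb] with ω hω using hω.1)
    simpa using this
  · have := integral_mono_ae hint (integrable_const u)
      (by filter_upwards [hb] with ω hω using hω.2)
    simpa using this

lemma mgf_bdd {X : Ω → ℝ} (hX : Measurable X) {l u : ℝ}
    (hb : ∀ᵐ ω ∂P, X ω ∈ Set.Icc l u) (t : ℝ) :
    ∫ ω, exp (t * X ω) ∂P ≤ exp (t * (∫ ω, X ω ∂P) + t ^ 2 * (u - l) ^ 2 / 8) := by
  have hlu : l ≤ u := by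
    have hne : ∃ ω, X ω ∈ Set.Icc l u := hb.exists
    obtain ⟨ω, hω⟩ := hne
    linarith [hω.1, hω.2]
  set m := ∫ ω, X ω ∂P with hm
  have hmem := mean_mem_Icc P hX hb
  rcases eq_or_lt_of_le hlu with heq | hlt
  · have hXl : ∀ᵐ ω ∂P, X ω = l := by
      filter_upwards [hb] with ω hω
      rw [← heq] at hω
      linarith [hω.1, hω.2]
    have h1 : ∫ ω, exp (t * X ω) ∂P = exp (t * l) := by
      rw [integral_congr_ae (g := fun _ => exp (t * l)) (by filter_upwards [hXl] with ω h using by rw [h])]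
      simp
    have h2 : m = l := by
      rw [hm, integral_congr_ae (g := fun _ => l) hXl]; simp
    rw [h1, h2]
    have : (0:ℝ) ≤ t ^ 2 * (u - l) ^ 2 / 8 := by positivity
    exact exp_le_exp.2 (by linarith)
  · set θ := (m - l) / (u - l) with hθ
    have hul : 0 < u - l := by linarith
    have hθ0 : 0 ≤ θ := div_nonneg (by linarith [hmem.1]) hul.le
    have hθ1 : θ ≤ 1 := by
      rw [hθ, div_le_one hul]; linarith [hmem.2]
    -- pointwise convexity bound
    have hpt : ∀ᵐ ω ∂P, exp (t * X ω) ≤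
        (u - X ω) / (u - l) * exp (t * l) + (X ω - l) / (u - l) * exp (t * u) := by
      filter_upwards [hb] with ω hω
      have ha : (0:ℝ) ≤ (u - X ω) / (u - l) := div_nonneg (by linarith [hω.2]) hul.le
      have hb' : (0:ℝ) ≤ (X ω - l) / (u - l) := div_nonneg (by linarith [hω.1]) hul.le
      have hab : (u - X ω) / (u - l) + (X ω - l) / (u - l) = 1 := by
        field_simp
        ring
      have := convexOn_exp.2 (Set.mem_univ (t * l)) (Set.mem_univ (t * u)) ha hb' hab
      simp only [smul_eq_mul] at this
      have harg : (u - X ω) / (u - l) * (t * l) + (X ω - l) / (u - l) * (t * u) = t * X ω := by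
        field_simp
        ring
      rwa [harg] at this
    have hint1 : Integrable (fun ω => exp (t * X ω)) P := integrable_exp_bdd P hX hb t
    have hXint : Integrable X P := integrable_bdd P hX hb
    have hint2 : Integrable (fun ω =>
        (u - X ω) / (u - l) * exp (t * l) + (X ω - l) / (u - l) * exp (t * u)) P := by
      apply Integrable.add
      · exact (((integrable_const u).sub hXint).div_const _).mul_const _
      · exact ((hXint.sub (integrable_const l)).div_const _).mul_const _
    have hstep := integral_mono_ae hint1 hint2 hpt
    have hptw : ∀ ω, (u - X ω) / (u - l) * exp (t * l) + (X ω - l) / (u - l) * exp (t * u)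
        = (u * exp (t * l) - l * exp (t * u)) / (u - l)
          + X ω * ((exp (t * u) - exp (t * l)) / (u - l)) := by
      intro ω; field_simp; ring
    have hval : ∫ ω, ((u - X ω) / (u - l) * exp (t * l) + (X ω - l) / (u - l) * exp (t * u)) ∂P
        = (u - m) / (u - l) * exp (t * l) + (m - l) / (u - l) * exp (t * u) := by
      simp_rw [hptw]
      rw [integral_add (integrable_const _) (hXint.mul_const _), integral_const,
        integral_mul_const, ← hm]
      simp only [probReal_univ, smul_eq_mul, one_mul]
      field_simp
      ring
    rw [hval] at hstep
    -- apply core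
    have hcore := hoeffding_core hθ0 hθ1 (t * (u - l))
    have hexp : exp (t * l) * exp (t * (u - l)) = exp (t * u) := by
      rw [← Real.exp_add]; congr 1; ring
    have hrw : (u - m) / (u - l) * exp (t * l) + (m - l) / (u - l) * exp (t * u)
        = exp (t * l) * ((1 - θ) + θ * exp (t * (u - l))) := by
      rw [hθ, ← hexp]
      field_simp
      ring
    have hfin : exp (t * l) * ((1 - θ) + θ * exp (t * (u - l)))
        ≤ exp (t * m + t ^ 2 * (u - l) ^ 2 / 8) := by
      calc exp (t * l) * ((1 - θ) + θ * exp (t * (u - l)))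
          ≤ exp (t * l) * exp (θ * (t * (u - l)) + (t * (u - l)) ^ 2 / 8) := by
            exact mul_le_mul_of_nonneg_left hcore (exp_pos _).le
        _ = exp (t * m + t ^ 2 * (u - l) ^ 2 / 8) := by
            rw [← Real.exp_add]
            congr 1
            have : θ * (t * (u - l)) = t * (m - l) := by
              rw [hθ]; field_simp
            rw [this]; ring
    linarith [hrw ▸ hstep]

end Helpers

/-- Hoeffding-inequality-based inner approximation of a linear chance constraint. -/
theorem hoeffding_chance_constraint
    {Ω : Type*} [MeasurableSpace Ω] (P : Measure Ω) [IsProbabilityMeasure P]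
    {n : ℕ} (z : Ω → Fin n → ℝ)
    (hmeas : ∀ i, Measurable (fun ω => z ω i))
    (hindep : iIndepFun (fun i ω => z ω i) P)
    (μ : Fin n → ℝ) (hμ : ∀ i, ∫ ω, z ω i ∂P = μ i)
    (zl zu : Fin n → ℝ)
    (hbdd : ∀ i, ∀ᵐ ω ∂P, z ω i ∈ Set.Icc (zl i) (zu i))
    (r : Fin n → ℝ) (hr : ∀ i, 0 ≤ r i)
    (a p : ℝ) (hp : p ∈ Set.Ioo (0 : ℝ) 1)
    (hineq : ∑ i, r i * μ i +
      Real.sqrt (-(1/2) * Real.log (1 - p)) *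
        Real.sqrt (∑ i, (r i) ^ 2 * (zu i - zl i) ^ 2) ≤ a) :
    p ≤ (P {ω | ∑ i, r i * z ω i ≤ a}).toReal := by
  set Y : Fin n → Ω → ℝ := fun i ω => r i * z ω i with hY
  have hYmeas : ∀ i, Measurable (Y i) := fun i => (hmeas i).const_mul (r i)
  have hYindep : iIndepFun Y P := by
    have := hindep.comp (fun i (x : ℝ) => r i * x) (fun i => measurable_const_mul (r i))
    exact this
  have hYb : ∀ i, ∀ᵐ ω ∂P, Y i ω ∈ Set.Icc (r i * zl i) (r i * zu i) := by
    intro i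
    filter_upwards [hbdd i] with ω hω
    exact ⟨mul_le_mul_of_nonneg_left hω.1 (hr i), mul_le_mul_of_nonneg_left hω.2 (hr i)⟩
  have hYmean : ∀ i, ∫ ω, Y i ω ∂P = r i * μ i := by
    intro i
    rw [hY]
    simp only
    rw [integral_const_mul, hμ i]
  set m : ℝ := ∑ i, r i * μ i with hm
  set V : ℝ := ∑ i, (r i) ^ 2 * (zu i - zl i) ^ 2 with hV
  have hV0 : 0 ≤ V := Finset.sum_nonneg fun i _ => by positivity
  have h1p : 0 < 1 - p := by linarith [hp.2]
  have hlog : Real.log (1 - p) < 0 := Real.log_neg h1p (by linarith [hp.1])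
  set K : ℝ := Real.sqrt (-(1/2) * Real.log (1 - p)) with hK
  have hK2 : K ^ 2 = -(1/2) * Real.log (1 - p) := Real.sq_sqrt (by linarith)
  have hKpos : 0 < K := Real.sqrt_pos.2 (by linarith)
  set S : Ω → ℝ := fun ω => ∑ i, r i * z ω i with hS
  have hSmeas : Measurable S := by
    apply Finset.measurable_sum
    intro i _
    exact (hmeas i).const_mul (r i)
  have hms : MeasurableSet {ω | S ω ≤ a} := measurableSet_le hSmeas measurable_const
  -- reduce to tail bound
  have hcompl : (P {ω | S ω ≤ a}).toReal + (P {ω | a < S ω}).toReal = 1 := by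
    have hc : {ω | S ω ≤ a}ᶜ = {ω | a < S ω} := by ext ω; simp [not_le]
    have := measure_add_measure_compl (μ := P) hms
    rw [hc, measure_univ] at this
    rw [← ENNReal.toReal_add (measure_ne_top P _) (measure_ne_top P _), this, ENNReal.toReal_one]
  suffices htail : (P {ω | a < S ω}).toReal ≤ 1 - p by linarith
  clear_value Y S m V K
  rcases eq_or_lt_of_le hV0 with hVz | hVpos
  · -- V = 0 : degenerate case
    have hVz' : ∑ i, (r i) ^ 2 * (zu i - zl i) ^ 2 = 0 := by rw [← hV, ← hVz]
    have hterm : ∀ i ∈ Finset.univ, (r i) ^ 2 * (zu i - zl i) ^ 2 = 0 := by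
      rwa [Finset.sum_eq_zero_iff_of_nonneg (fun i _ => by positivity)] at hVz'
    have hYe : ∀ i, ∀ᵐ ω ∂P, Y i ω = r i * μ i := by
      intro i
      have := hterm i (Finset.mem_univ i)
      rcases mul_eq_zero.mp this with h' | h'
      · have hr0 : r i = 0 := by
          have := sq_eq_zero_iff.mp h'; exact this
        filter_upwards with ω
        simp [hY, hr0]
      · have hul : zu i = zl i := by
          have := sq_eq_zero_iff.mp h'; linarith
        have hμi : μ i = zl i := by
          have := mean_mem_Icc P (hmeas i) (hbdd i)
          rw [hμ i, hul] at this
          exact le_antisymm this.2 this.1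
        filter_upwards [hbdd i] with ω hω
        rw [hul] at hω
        have : z ω i = zl i := le_antisymm hω.2 hω.1
        rw [hY]; simp only; rw [this, hμi]
    have hSe : ∀ᵐ ω ∂P, S ω = m := by
      have := (ae_all_iff).2 hYe
      filter_upwards [this] with ω hω
      simp only [hY] at hω
      rw [hS, hm]
      simp only
      exact Finset.sum_congr rfl fun i _ => hω i
    have hma : m ≤ a := by
      have h0' : Real.sqrt V = 0 := by rw [← hVz, Real.sqrt_zero]
      rw [h0', mul_zero, add_zero] at hineq
      exact hineq
    have h0 : P {ω | a < S ω} = 0 := by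
      rw [← le_zero_iff]
      have hae : ∀ᵐ ω ∂P, ¬ (a < S ω) := by
        filter_upwards [hSe] with ω hω
        rw [hω]; exact not_lt.2 hma
      rw [ae_iff] at hae
      simp only [not_not] at hae
      exact le_of_eq hae
    rw [h0]
    simp
    linarith [hp.1]
  · -- V > 0 : Chernoff bound
    set σ : ℝ := Real.sqrt V with hσ
    have hσpos : 0 < σ := Real.sqrt_pos.2 hVpos
    have hσ2 : σ ^ 2 = V := Real.sq_sqrt hV0
    set ε : ℝ := a - m with hε
    have hεK : K * σ ≤ ε := by rw [hε, hσ]; linarith [hineq]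
    have hεpos : 0 < ε := lt_of_lt_of_le (mul_pos hKpos hσpos) hεK
    set t : ℝ := 4 * ε / V with ht
    have htpos : 0 < t := by rw [ht]; positivity
    clear_value σ ε t
    have hintexp : ∀ i, Integrable (fun ω => exp (t * Y i ω)) P :=
      fun i => integrable_exp_bdd P (hYmeas i) (hYb i) t
    have hSint : Integrable (fun ω => exp (t * (∑ i, Y i) ω)) P :=
      hYindep.integrable_exp_mul_sum hYmeas fun i _ => hintexp i
    have hch := measure_ge_le_exp_mul_mgf (X := ∑ i, Y i) (μ := P) a htpos.le hSint
    have hsetEq : {ω | a ≤ (∑ i, Y i) ω} = {ω | a ≤ S ω} := by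
      ext ω; simp [hS, hY, Finset.sum_apply]
    rw [hsetEq] at hch
    have hmgfprod : mgf (∑ i, Y i) P t = ∏ i, mgf (Y i) P t :=
      hYindep.mgf_sum hYmeas Finset.univ
    have hmgfbound : ∀ i, mgf (Y i) P t ≤
        exp (t * (r i * μ i) + t ^ 2 / 8 * ((r i) ^ 2 * (zu i - zl i) ^ 2)) := by
      intro i
      have := mgf_bdd P (hYmeas i) (hYb i) t
      rw [hYmean i] at this
      unfold mgf
      refine le_trans this (le_of_eq ?_)
      congr 1
      ring
    have hprod : ∏ i, mgf (Y i) P t ≤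
        exp (∑ i, (t * (r i * μ i) + t ^ 2 / 8 * ((r i) ^ 2 * (zu i - zl i) ^ 2))) := by
      rw [Real.exp_sum]
      exact Finset.prod_le_prod (fun i _ => mgf_nonneg) fun i _ => hmgfbound i
    have hsum : ∑ i, (t * (r i * μ i) + t ^ 2 / 8 * ((r i) ^ 2 * (zu i - zl i) ^ 2))
        = t * m + t ^ 2 / 8 * V := by
      rw [Finset.sum_add_distrib, ← Finset.mul_sum, ← Finset.mul_sum, hm, hV]
    have htot : (P {ω | a ≤ S ω}).toReal ≤ exp (-(2 * ε ^ 2) / V) := by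
      calc (P {ω | a ≤ S ω}).toReal ≤ exp (-t * a) * mgf (∑ i, Y i) P t := hch
        _ ≤ exp (-t * a) * exp (t * m + t ^ 2 / 8 * V) := by
            rw [hmgfprod]
            exact mul_le_mul_of_nonneg_left (le_trans hprod (by rw [hsum])) (exp_pos _).le
        _ = exp (-t * a + (t * m + t ^ 2 / 8 * V)) := by rw [← Real.exp_add]
        _ = exp (-(2 * ε ^ 2) / V) := by
            congr 1
            rw [ht, hε]
            field_simp
            ring
    have hexp_le : exp (-(2 * ε ^ 2) / V) ≤ 1 - p := by
      rw [← Real.exp_log h1p]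
      apply Real.exp_le_exp.2
      have hε2 : K ^ 2 * V ≤ ε ^ 2 := by
        have h1 : K * σ ≤ ε := hεK
        have h2 : 0 ≤ K * σ := (mul_pos hKpos hσpos).le
        nlinarith [hσ2]
      have hlp : Real.log (1 - p) = -2 * K ^ 2 := by rw [hK2]; ring
      rw [div_le_iff₀ hVpos, hlp]
      nlinarith [hε2]
    calc (P {ω | a < S ω}).toReal ≤ (P {ω | a ≤ S ω}).toReal :=
          ENNReal.toReal_mono (measure_ne_top P _)
            (measure_mono (fun ω h => by
              simp only [Set.mem_setOf_eq] at h ⊢; exact le_of_lt h))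
      _ ≤ 1 - p := le_trans htot hexp_le
end

section
/- Let (Ω, 𝓕, ℙ) be a probability space and 𝔷 = (𝔷_1, …, 𝔷_n) : Ω → ℝⁿ a random vector whose components are independent, with mean vector μ ∈ ℝⁿ and almost-sure bounds 𝔷_i^l ≤ 𝔷_i ≤ 𝔷_i^u with 𝔷_i^l < 𝔷_i^u for each i. Let r ∈ ℝⁿ with r ≥ 0 componentwise, a ∈ ℝ, p ∈ (0,1), and h > 0 an arbitrarily fixed constant. Set A_i = (μ_i − 𝔷_i^l)/(𝔷_i^u − 𝔷_i^l). If Σ_{i=1}^n ln{ A_i · exp(h r_i 𝔷_i^u) + (1 − A_i) · exp(h r_i 𝔷_i^l) } ≤ ln(1−p) + h·a, then ℙ(rᵀ𝔷 ≤ a) ≥ p. -/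
open MeasureTheory ProbabilityTheory

/-- Bernstein-inequality-based convex inner approximation of a linear chance constraint. -/
theorem bernstein_chance_constraint
    {Ω : Type*} [MeasurableSpace Ω] (P : Measure Ω) [IsProbabilityMeasure P]
    {n : ℕ} (z : Ω → Fin n → ℝ)
    (hmeas : ∀ i, Measurable (fun ω => z ω i))
    (hindep : iIndepFun (fun i ω => z ω i) P)
    (μ : Fin n → ℝ) (hμ : ∀ i, ∫ ω, z ω i ∂P = μ i)
    (zl zu : Fin n → ℝ)
    (hbdd : ∀ i, ∀ᵐ ω ∂P, z ω i ∈ Set.Icc (zl i) (zu i))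
    (r : Fin n → ℝ) (hr : ∀ i, 0 ≤ r i)
    (a p h : ℝ) (hp : p ∈ Set.Ioo (0 : ℝ) 1) (hh : 0 < h)
    (A : Fin n → ℝ) (hA : ∀ i, A i = (μ i - zl i) / (zu i - zl i))
    (hineq : ∑ i, Real.log
        (A i * Real.exp (h * r i * zu i) + (1 - A i) * Real.exp (h * r i * zl i))
      ≤ Real.log (1 - p) + h * a) :
    p ≤ (P {ω | ∑ i, r i * z ω i ≤ a}).toReal := by
  obtain ⟨hp0, hp1⟩ := hp
  set X : Fin n → Ω → ℝ := fun i ω => r i * z ω i with hX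
  have hXmeas : ∀ i, Measurable (X i) := fun i => (hmeas i).const_mul (r i)
  have hXindep : iIndepFun X P := by
    have := hindep.comp (fun i (x : ℝ) => r i * x) (fun i => measurable_const_mul (r i))
    exact this
  -- integrability of exp (h * X i)
  have hint : ∀ i, Integrable (fun ω => Real.exp (h * X i ω)) P := by
    intro i
    refine Integrable.mono' (integrable_const (Real.exp (h * r i * zu i)))
      (((hXmeas i).const_mul h).exp.aestronglyMeasurable) ?_
    filter_upwards [hbdd i] with ω hω
    rw [Real.norm_eq_abs, abs_of_pos (Real.exp_pos _)]
    apply Real.exp_le_exp.2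
    have h1 : h * r i * z ω i ≤ h * r i * zu i :=
      mul_le_mul_of_nonneg_left hω.2 (mul_nonneg hh.le (hr i))
    calc h * X i ω = h * r i * z ω i := by rw [hX]; ring
      _ ≤ _ := h1
  -- z i integrable
  have hzint : ∀ i, Integrable (fun ω => z ω i) P := by
    intro i
    refine Integrable.mono' (integrable_const (max |zl i| |zu i|))
      (hmeas i).aestronglyMeasurable ?_
    filter_upwards [hbdd i] with ω hω
    rw [Real.norm_eq_abs, abs_le]
    constructor
    · calc -(max |zl i| |zu i|) ≤ -|zl i| := by simp [le_max_left]
        _ ≤ zl i := neg_abs_le _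
        _ ≤ z ω i := hω.1
    · calc z ω i ≤ zu i := hω.2
        _ ≤ |zu i| := le_abs_self _
        _ ≤ max |zl i| |zu i| := le_max_right _ _
  -- per-coordinate mgf bound
  set c : Fin n → ℝ := fun i =>
    A i * Real.exp (h * r i * zu i) + (1 - A i) * Real.exp (h * r i * zl i) with hc
  have key : ∀ i, mgf (X i) P h ≤ c i := by
    intro i
    have hle : zl i ≤ zu i := by
      have hne : (ae P).NeBot := ae_neBot.2 (IsProbabilityMeasure.ne_zero P)
      obtain ⟨ω, hω⟩ := (hbdd i).exists
      exact le_trans hω.1 hω.2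
    rcases eq_or_lt_of_le hle with heq | hlt
    · -- degenerate case zl = zu
      have hA0 : A i = 0 := by rw [hA i, ← heq]; simp
      have hmgf : mgf (X i) P h = Real.exp (h * r i * zl i) := by
        have hcong : ∫ ω, Real.exp (h * X i ω) ∂P = ∫ _ω, Real.exp (h * r i * zl i) ∂P := by
          refine integral_congr_ae ?_
          filter_upwards [hbdd i] with ω hω
          have hz : z ω i = zl i := le_antisymm (heq ▸ hω.2) hω.1
          simp [hX, hz, mul_assoc]
        rw [mgf, hcong, integral_const]; simp
      rw [hmgf]; simp [hc, hA0]
    · have hd : (0:ℝ) < zu i - zl i := by linarith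
      set θ : Ω → ℝ := fun ω => (z ω i - zl i) / (zu i - zl i) with hθ
      have hθint : Integrable θ P := ((hzint i).sub (integrable_const _)).div_const _
      have hθavg : ∫ ω, θ ω ∂P = A i := by
        rw [hθ, hA i]
        simp only [integral_div, integral_sub (hzint i) (integrable_const _),
          integral_const, measure_univ, ENNReal.toReal_one, probReal_univ, one_smul, hμ i]
      have h1int : Integrable (fun ω => θ ω * Real.exp (h * r i * zu i)) P :=
        hθint.mul_const _
      have h0int : Integrable (fun ω => (1:ℝ) - θ ω) P := (integrable_const 1).sub hθint
      have h2int : Integrable (fun ω => (1 - θ ω) * Real.exp (h * r i * zl i)) P :=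
        h0int.mul_const _
      have hRHSint : Integrable (fun ω =>
          θ ω * Real.exp (h * r i * zu i) + (1 - θ ω) * Real.exp (h * r i * zl i)) P :=
        h1int.add h2int
      have hpt : ∀ᵐ ω ∂P, Real.exp (h * X i ω) ≤
          θ ω * Real.exp (h * r i * zu i) + (1 - θ ω) * Real.exp (h * r i * zl i) := by
        filter_upwards [hbdd i] with ω hω
        have hθ0 : 0 ≤ θ ω := by
          apply div_nonneg _ hd.le; linarith [hω.1]
        have hθ1 : 0 ≤ 1 - θ ω := by
          have : θ ω ≤ 1 := by
            rw [div_le_one hd]; linarith [hω.2]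
          linarith
        have hxeq : h * X i ω = θ ω • (h * r i * zu i) + (1 - θ ω) • (h * r i * zl i) := by
          rw [hX, hθ]
          simp only [smul_eq_mul]
          linear_combination (-(h * r i * (z ω i - zl i))) * div_self hd.ne'
        have := convexOn_exp.2 (Set.mem_univ (h * r i * zu i)) (Set.mem_univ (h * r i * zl i))
          hθ0 hθ1 (by ring)
        rw [hxeq]
        simpa [smul_eq_mul] using this
      calc mgf (X i) P h ≤ ∫ ω, (θ ω * Real.exp (h * r i * zu i)
            + (1 - θ ω) * Real.exp (h * r i * zl i)) ∂P :=
          integral_mono_ae (hint i) hRHSint hpt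
        _ = c i := by
          rw [integral_add h1int h2int, integral_mul_const, integral_mul_const,
            integral_sub (integrable_const _) hθint, integral_const, hθavg]
          simp [hc]
  have hcpos : ∀ i, 0 < c i := fun i => lt_of_lt_of_le (mgf_pos (hint i)) (key i)
  -- sum random variable
  set S : Ω → ℝ := fun ω => ∑ i, r i * z ω i with hS
  have hSsum : S = ∑ i, X i := by
    funext ω; simp [hS, hX, Finset.sum_apply]
  have hSmeas : Measurable S := by
    apply Finset.measurable_sum
    intro i _; exact hXmeas i
  have hSint : Integrable (fun ω => Real.exp (h * S ω)) P := by
    rw [hSsum]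
    exact hXindep.integrable_exp_mul_sum hXmeas (fun i _ => hint i)
  -- mgf of sum
  have hmgfS : mgf S P h = ∏ i, mgf (X i) P h := by
    rw [hSsum]; exact hXindep.mgf_sum hXmeas Finset.univ
  have hprod : ∏ i, mgf (X i) P h ≤ (1 - p) * Real.exp (h * a) := by
    calc ∏ i, mgf (X i) P h ≤ ∏ i, c i := by
          apply Finset.prod_le_prod (fun i _ => (mgf_pos (hint i)).le) (fun i _ => key i)
      _ = Real.exp (∑ i, Real.log (c i)) := by
          rw [Real.exp_sum]
          exact Finset.prod_congr rfl (fun i _ => (Real.exp_log (hcpos i)).symm)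
      _ ≤ Real.exp (Real.log (1 - p) + h * a) := Real.exp_le_exp.2 hineq
      _ = (1 - p) * Real.exp (h * a) := by
          rw [Real.exp_add, Real.exp_log (by linarith)]
  -- Chernoff
  have hcher : (P {ω | a ≤ S ω}).toReal ≤ 1 - p := by
    calc (P {ω | a ≤ S ω}).toReal ≤ Real.exp (-h * a) * mgf S P h :=
          measure_ge_le_exp_mul_mgf a hh.le hSint
      _ ≤ Real.exp (-h * a) * ((1 - p) * Real.exp (h * a)) := by
          apply mul_le_mul_of_nonneg_left _ (Real.exp_pos _).le
          rw [hmgfS] at *; exact hprod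
      _ = (Real.exp (-h * a) * Real.exp (h * a)) * (1 - p) := by ring
      _ = 1 - p := by rw [← Real.exp_add]; simp
  -- complement
  have hset : {ω | S ω ≤ a} = {ω | a < S ω}ᶜ := by
    ext ω; simp [not_lt]
  have hsub : (P {ω | a < S ω}).toReal ≤ (P {ω | a ≤ S ω}).toReal := by
    apply ENNReal.toReal_mono (measure_ne_top _ _)
    exact measure_mono (Set.setOf_subset_setOf.2 fun ω hω => le_of_lt hω)
  have hcompl : (P {ω | S ω ≤ a}).toReal = 1 - (P {ω | a < S ω}).toReal := by
    rw [hset]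
    have hm : MeasurableSet {ω | a < S ω} := measurableSet_lt measurable_const hSmeas
    rw [measure_compl hm (measure_ne_top _ _), measure_univ]
    rw [ENNReal.toReal_sub_of_le prob_le_one (by simp)]
    simp
  rw [show {ω | ∑ i, r i * z ω i ≤ a} = {ω | S ω ≤ a} from rfl, hcompl]
  linarith [le_trans hsub hcher]
end

section
/- Let p ∈ (0,1) and θ ≥ 1. The function f̂(y) = √( p^{y^{1/θ}} / (1 − p^{y^{1/θ}}) ) is a convex function of y on the interval (0, 1]. -/
open Real Set

private lemma convexOn_congr_aux {s : Set ℝ} {f g : ℝ → ℝ}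
    (hf : ConvexOn ℝ s f) (h : Set.EqOn f g s) : ConvexOn ℝ s g :=
  ⟨hf.1, fun x hx y hy a b ha hb hab => by
    rw [← h hx, ← h hy, ← h (hf.1 hx hy ha hb hab)]
    exact hf.2 hx hy ha hb hab⟩

private lemma comp_aux {s t : Set ℝ} {f g : ℝ → ℝ}
    (hg : ConvexOn ℝ t g) (hf : ConcaveOn ℝ s f) (hmem : ∀ x ∈ s, f x ∈ t)
    (hg' : AntitoneOn g t) : ConvexOn ℝ s (fun x => g (f x)) :=
  ⟨hf.1, fun x hx y hy a b ha hb hab =>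
    le_trans
      (hg' (hg.1 (hmem x hx) (hmem y hy) ha hb hab)
        (hmem _ (hf.1 hx hy ha hb hab)) (hf.2 hx hy ha hb hab))
      (hg.2 (hmem x hx) (hmem y hy) ha hb hab)⟩

/-- Convexity of `x ↦ (exp (b x) - 1) ^ (-(1/2))` on `(0, ∞)` for `b > 0`. -/
private lemma convexOn_aux (b : ℝ) (hb : 0 < b) :
    ConvexOn ℝ (Ioi (0 : ℝ)) (fun x => (Real.exp (b * x) - 1) ^ (-(1/2) : ℝ)) := by
  have he : ∀ x : ℝ, HasDerivAt (fun x => Real.exp (b * x)) (b * Real.exp (b * x)) x := by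
    intro x
    simpa [mul_comm] using ((hasDerivAt_id x).const_mul b).exp
  have hv : ∀ x : ℝ, HasDerivAt (fun x => Real.exp (b * x) - 1) (b * Real.exp (b * x)) x :=
    fun x => (he x).sub_const 1
  have hvpos : ∀ x : ℝ, x ∈ Ioi (0:ℝ) → 0 < Real.exp (b * x) - 1 := by
    intro x hx
    have h1 : (0:ℝ) < b * x := mul_pos hb hx
    linarith [Real.add_one_le_exp (b * x)]
  set f' : ℝ → ℝ := fun x =>
    -(b/2) * Real.exp (b * x) * (Real.exp (b * x) - 1) ^ (-(3/2) : ℝ) with hf'def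
  have hd1 : ∀ x ∈ Ioi (0:ℝ),
      HasDerivAt (fun x => (Real.exp (b * x) - 1) ^ (-(1/2) : ℝ)) (f' x) x := by
    intro x hx
    have h := (hv x).rpow_const (p := (-(1/2) : ℝ)) (Or.inl (ne_of_gt (hvpos x hx)))
    have h32 : (-(1/2) - 1 : ℝ) = -(3/2) := by norm_num
    rw [h32] at h
    convert h using 1
    ring
  set f'' : ℝ → ℝ := fun x =>
    (-(b/2) * (b * Real.exp (b * x))) * (Real.exp (b * x) - 1) ^ (-(3/2) : ℝ)
    + (-(b/2) * Real.exp (b * x)) *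
      (b * Real.exp (b * x) * (-(3/2)) * (Real.exp (b * x) - 1) ^ (-(5/2) : ℝ)) with hf''def
  have hd2 : ∀ x ∈ Ioi (0:ℝ), HasDerivAt f' (f'' x) x := by
    intro x hx
    have hw := (hv x).rpow_const (p := (-(3/2) : ℝ)) (Or.inl (ne_of_gt (hvpos x hx)))
    have h52 : (-(3/2) - 1 : ℝ) = -(5/2) := by norm_num
    rw [h52] at hw
    have hc : HasDerivAt (fun x => -(b/2) * Real.exp (b * x)) (-(b/2) * (b * Real.exp (b * x))) x :=
      (he x).const_mul _
    exact hc.mul hw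
  have hnonneg : ∀ x ∈ Ioi (0:ℝ), 0 ≤ f'' x := by
    intro x hx
    have hv' := hvpos x hx
    set u := Real.exp (b * x) with hu
    have hu1 : 1 < u := by linarith
    have hR : (0:ℝ) < (u - 1) ^ (-(5/2) : ℝ) := Real.rpow_pos_of_pos hv' _
    have hsplit : (u - 1) ^ (-(3/2) : ℝ) = (u - 1) * (u - 1) ^ (-(5/2) : ℝ) := by
      rw [← Real.rpow_one_add' (by linarith) (by norm_num)]
      norm_num
    rw [hf''def]
    simp only []
    rw [hsplit]
    have key : (-(b/2) * (b * u)) * ((u - 1) * (u - 1) ^ (-(5/2) : ℝ))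
        + (-(b/2) * u) * (b * u * (-(3/2)) * (u - 1) ^ (-(5/2) : ℝ))
        = b * b * u * (u/4 + 1/2) * (u - 1) ^ (-(5/2) : ℝ) := by ring
    rw [key]
    have : (0:ℝ) < u := by linarith
    positivity
  have hcont : ContinuousOn (fun x => (Real.exp (b * x) - 1) ^ (-(1/2) : ℝ)) (Ioi (0:ℝ)) :=
    fun x hx => ((hd1 x hx).continuousAt).continuousWithinAt
  refine convexOn_of_hasDerivWithinAt2_nonneg (convex_Ioi 0) hcont
    (f' := f') (f'' := f'') ?_ ?_ ?_
  · intro x hx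
    rw [interior_Ioi] at hx ⊢
    exact (hd1 x hx).hasDerivWithinAt
  · intro x hx
    rw [interior_Ioi] at hx ⊢
    exact (hd2 x hx).hasDerivWithinAt
  · intro x hx
    rw [interior_Ioi] at hx
    exact hnonneg x hx

/-- Convexity of the one-sided-Chebyshev safety-factor function
`y ↦ √(p^(y^(1/θ)) / (1 − p^(y^(1/θ))))` on `(0, 1]`. -/
theorem convexOn_sqrt_ratio_rpow
    (p θ : ℝ) (hp : p ∈ Set.Ioo (0 : ℝ) 1) (hθ : 1 ≤ θ) :
    ConvexOn ℝ (Set.Ioc (0 : ℝ) 1)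
      (fun y => Real.sqrt (p ^ (y ^ (1 / θ)) / (1 - p ^ (y ^ (1 / θ))))) := by
  obtain ⟨hp0, hp1⟩ := hp
  set g : ℝ → ℝ := fun x => Real.sqrt (p ^ x / (1 - p ^ x)) with hgdef
  set b : ℝ := -Real.log p with hbdef
  have hbpos : 0 < b := by
    rw [hbdef]
    simpa using Real.log_neg hp0 hp1
  -- `g` agrees with the auxiliary function on `(0, ∞)`
  have heq : Set.EqOn (fun x => (Real.exp (b * x) - 1) ^ (-(1/2) : ℝ)) g (Ioi (0:ℝ)) := by
    intro x hx
    have ht0 : 0 < p ^ x := Real.rpow_pos_of_pos hp0 x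
    have ht1 : p ^ x < 1 := Real.rpow_lt_one hp0.le hp1 hx
    have hexp : Real.exp (b * x) = (p ^ x)⁻¹ := by
      rw [Real.rpow_def_of_pos hp0, ← Real.exp_neg, hbdef]
      ring_nf
    have hbase : Real.exp (b * x) - 1 = (p ^ x / (1 - p ^ x))⁻¹ := by
      rw [hexp]
      field_simp
    have hanonneg : (0:ℝ) ≤ p ^ x / (1 - p ^ x) := div_nonneg ht0.le (by linarith)
    simp only [hgdef]
    rw [hbase, Real.inv_rpow hanonneg, Real.rpow_neg hanonneg, inv_inv, Real.sqrt_eq_rpow]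
  have hgconv : ConvexOn ℝ (Ioi (0:ℝ)) g :=
    convexOn_congr_aux (convexOn_aux b hbpos) heq
  -- antitonicity of `g` on `(0, ∞)`
  have hganti : AntitoneOn g (Ioi (0:ℝ)) := by
    intro x hx y hy hxy
    have hx0 : 0 < p ^ x := Real.rpow_pos_of_pos hp0 x
    have hy0 : 0 < p ^ y := Real.rpow_pos_of_pos hp0 y
    have hx1 : p ^ x < 1 := Real.rpow_lt_one hp0.le hp1 hx
    have hy1 : p ^ y < 1 := Real.rpow_lt_one hp0.le hp1 hy
    have hle : p ^ y ≤ p ^ x := Real.rpow_le_rpow_of_exponent_ge hp0 hp1.le hxy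
    simp only [hgdef]
    apply Real.sqrt_le_sqrt
    rw [div_le_div_iff₀ (by linarith) (by linarith)]
    nlinarith
  -- concavity of `y ↦ y ^ (1/θ)` on `(0, 1]`
  have hθ0 : (0:ℝ) < θ := lt_of_lt_of_le one_pos hθ
  have hinner : ConcaveOn ℝ (Set.Ioc (0:ℝ) 1) (fun y : ℝ => y ^ (1/θ)) :=
    (Real.concaveOn_rpow (by positivity) (by rw [div_le_one hθ0]; exact hθ)).subset
      (fun y hy => le_of_lt hy.1) (convex_Ioc 0 1)
  have hmem : ∀ y ∈ Set.Ioc (0:ℝ) 1, y ^ (1/θ) ∈ Ioi (0:ℝ) :=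
    fun y hy => Real.rpow_pos_of_pos hy.1 _
  show ConvexOn ℝ (Set.Ioc (0:ℝ) 1) (fun y => g (y ^ (1/θ)))
  exact comp_aux hgconv hinner hmem hganti
end

section
/- Let θ ≥ 1 and p ∈ [1 − e^{−1/2}, 1). The function f̄(y) = √( −(1/2) · ln(1 − p^{y^{1/θ}}) ) is a convex function of y on the interval (0, 1]. -/
open Real Set

/-- The core function `φ t = √(−(1/2)·log(1 − e^(−t)))`. -/
noncomputable def hoeffPhi (t : ℝ) : ℝ :=
  Real.sqrt (-(1/2) * Real.log (1 - Real.exp (-t)))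

/-- Its derivative. -/
noncomputable def hoeffPhiD (t : ℝ) : ℝ :=
  -Real.exp (-t) /
    (4 * (1 - Real.exp (-t)) * Real.sqrt (-(1/2) * Real.log (1 - Real.exp (-t))))

lemma hoeff_basic {x : ℝ} (hx : 0 < x) :
    0 < Real.exp (-x) ∧ Real.exp (-x) < 1 ∧ 0 < 1 - Real.exp (-x) ∧
      Real.log (1 - Real.exp (-x)) < 0 ∧
      0 < -(1/2) * Real.log (1 - Real.exp (-x)) := by
  have h1 : Real.exp (-x) < 1 := by
    have := Real.exp_lt_exp.2 (show -x < 0 by linarith)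
    simpa using this
  have h2 : 0 < 1 - Real.exp (-x) := by linarith
  have h3 : Real.log (1 - Real.exp (-x)) < 0 :=
    Real.log_neg h2 (by have := Real.exp_pos (-x); linarith)
  exact ⟨Real.exp_pos _, h1, h2, h3, by linarith⟩

lemma hoeffPhi_pos {x : ℝ} (hx : 0 < x) : 0 < hoeffPhi x := by
  obtain ⟨_, _, _, _, hI⟩ := hoeff_basic hx
  exact Real.sqrt_pos.2 hI

lemma hoeffPhi_hasDerivAt {x : ℝ} (hx : 0 < x) :
    HasDerivAt hoeffPhi (hoeffPhiD x) x := by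
  obtain ⟨hs, hs1, hA, hlA, hI⟩ := hoeff_basic hx
  have hexp : HasDerivAt (fun t : ℝ => Real.exp (-t)) (-Real.exp (-x)) x := by
    simpa [Function.comp_def] using (Real.hasDerivAt_exp (-x)).comp x (hasDerivAt_neg x)
  have hAd : HasDerivAt (fun t : ℝ => 1 - Real.exp (-t)) (Real.exp (-x)) x := by
    simpa [Pi.sub_def] using (hasDerivAt_const x (1:ℝ)).sub hexp
  have hlog : HasDerivAt (fun t : ℝ => Real.log (1 - Real.exp (-t)))
      (Real.exp (-x) / (1 - Real.exp (-x))) x := hAd.log (ne_of_gt hA)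
  have hInn : HasDerivAt (fun t : ℝ => -(1/2) * Real.log (1 - Real.exp (-t)))
      (-(1/2) * (Real.exp (-x) / (1 - Real.exp (-x)))) x := hlog.const_mul _
  have hsq : HasDerivAt hoeffPhi
      (1 / (2 * Real.sqrt (-(1/2) * Real.log (1 - Real.exp (-x)))) *
        (-(1/2) * (Real.exp (-x) / (1 - Real.exp (-x))))) x :=
    (Real.hasDerivAt_sqrt (ne_of_gt hI)).comp x hInn
  have heq : (1 / (2 * Real.sqrt (-(1/2) * Real.log (1 - Real.exp (-x))))) *
      (-(1/2) * (Real.exp (-x) / (1 - Real.exp (-x)))) = hoeffPhiD x := by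
    have hP : 0 < Real.sqrt (-(1/2) * Real.log (1 - Real.exp (-x))) := Real.sqrt_pos.2 hI
    unfold hoeffPhiD
    field_simp
    ring
  rw [← heq]
  exact hsq

lemma hoeffPhiD_hasDerivAt {x : ℝ} (hx : 0 < x) :
    ∃ d, HasDerivAt hoeffPhiD d x ∧ 0 ≤ d := by
  obtain ⟨hs, hs1, hA, hlA, hI⟩ := hoeff_basic hx
  set s := Real.exp (-x) with hsdef
  set P := Real.sqrt (-(1/2) * Real.log (1 - s)) with hPdef
  have hP : 0 < P := Real.sqrt_pos.2 hI
  have hP2 : P ^ 2 = -(1/2) * Real.log (1 - s) := Real.sq_sqrt hI.le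
  have hexp : HasDerivAt (fun t : ℝ => Real.exp (-t)) (-s) x := by
    simpa [Function.comp_def] using (Real.hasDerivAt_exp (-x)).comp x (hasDerivAt_neg x)
  have hN : HasDerivAt (fun t : ℝ => -Real.exp (-t)) s x := by
    simpa [Pi.neg_def] using hexp.neg
  have hAd : HasDerivAt (fun t : ℝ => 4 * (1 - Real.exp (-t))) (4 * s) x := by
    simpa using ((hasDerivAt_const x (1:ℝ)).sub hexp).const_mul 4
  have hphi : HasDerivAt (fun t : ℝ =>
      Real.sqrt (-(1/2) * Real.log (1 - Real.exp (-t)))) (hoeffPhiD x) x :=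
    hoeffPhi_hasDerivAt hx
  have hD : HasDerivAt (fun t : ℝ =>
      4 * (1 - Real.exp (-t)) * Real.sqrt (-(1/2) * Real.log (1 - Real.exp (-t))))
      (4 * s * P + 4 * (1 - s) * hoeffPhiD x) x := hAd.mul hphi
  have hDx : 4 * (1 - s) * P ≠ 0 := by positivity
  have hdiv := hN.div hD hDx
  refine ⟨_, hdiv, ?_⟩
  apply div_nonneg _ (by positivity)
  -- numerator: s * (4(1-s)P) - (-s) * (4sP + 4(1-s) * φ'(x)) ≥ 0
  have hphid : hoeffPhiD x = -s / (4 * (1 - s) * P) := by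
    simp only [hoeffPhiD, ← hsdef, ← hPdef]
  rw [hphid]
  have hlogle : Real.log (1 - s) ≤ -s := by
    have := Real.log_le_sub_one_of_pos hA
    linarith
  have h4P2 : 2 * s ≤ 4 * P ^ 2 := by rw [hP2]; linarith
  have hkey : 4 * (1 - s) * (-s / (4 * (1 - s) * P)) = -s / P := by
    field_simp
  rw [hkey]
  have : 0 ≤ s * (4 * P ^ 2 - s) := by nlinarith
  have hexpand : s * (4 * (1 - s) * P) - -s * (4 * s * P + -s / P)
      = s * (4 * P ^ 2 - s) / P := by
    field_simp
    ring
  rw [hexpand]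
  positivity

lemma hoeffPhi_continuousOn : ContinuousOn hoeffPhi (Set.Ioi 0) := by
  apply Real.continuous_sqrt.comp_continuousOn
  apply ContinuousOn.mul continuousOn_const
  apply ContinuousOn.log
  · exact continuousOn_const.sub ((Real.continuous_exp.comp continuous_neg).continuousOn)
  · intro x hx
    exact ne_of_gt (hoeff_basic hx).2.2.1

lemma hoeffPhi_convexOn : ConvexOn ℝ (Set.Ioi 0) hoeffPhi := by
  apply convexOn_of_hasDerivWithinAt2_nonneg (convex_Ioi 0) hoeffPhi_continuousOn
    (f' := hoeffPhiD) (f'' := deriv hoeffPhiD)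
  · intro x hx
    rw [interior_Ioi] at hx
    exact (hoeffPhi_hasDerivAt hx).hasDerivWithinAt
  · intro x hx
    rw [interior_Ioi] at hx
    obtain ⟨d, hd, _⟩ := hoeffPhiD_hasDerivAt hx
    exact (hd.deriv ▸ hd).hasDerivWithinAt
  · intro x hx
    rw [interior_Ioi] at hx
    obtain ⟨d, hd, hd0⟩ := hoeffPhiD_hasDerivAt hx
    rw [hd.deriv]; exact hd0

lemma hoeffPhi_antitoneOn : AntitoneOn hoeffPhi (Set.Ioi 0) := by
  intro a ha b hb hab
  apply Real.sqrt_le_sqrt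
  have h1 : Real.exp (-b) ≤ Real.exp (-a) := Real.exp_le_exp.2 (by linarith)
  have h2 : Real.log (1 - Real.exp (-a)) ≤ Real.log (1 - Real.exp (-b)) :=
    Real.log_le_log (hoeff_basic (Set.mem_Ioi.1 ha)).2.2.1 (by linarith)
  linarith

/-- Convexity of the Hoeffding safety-factor function
`y ↦ √(−(1/2)·ln(1 − p^(y^(1/θ))))` on `(0, 1]`, for `p ≥ 1 − e^(−1/2)`. -/
theorem convexOn_sqrt_neg_log_rpow
    (p θ : ℝ) (hθ : 1 ≤ θ)
    (hp : 1 - Real.exp (-(1/2)) ≤ p) (hp1 : p < 1) :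
    ConvexOn ℝ (Set.Ioc (0 : ℝ) 1)
      (fun y => Real.sqrt (-(1/2) * Real.log (1 - p ^ (y ^ (1 / θ))))) := by
  have hθ0 : 0 < θ := by linarith
  have hp0 : 0 < p := by
    have h1 : Real.exp (-(1/2 : ℝ)) < 1 := by
      have := Real.exp_lt_exp.2 (show -(1/2 : ℝ) < 0 by norm_num)
      simpa using this
    linarith
  have hlp : Real.log p < 0 := Real.log_neg hp0 hp1
  set c := -Real.log p with hcdef
  have hc0 : 0 < c := by simp [hcdef]; linarith
  have hrw : (fun y : ℝ => Real.sqrt (-(1/2) * Real.log (1 - p ^ (y ^ (1/θ)))))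
      = fun y => hoeffPhi (c * y ^ (1/θ)) := by
    funext y
    have h1 : -(c * y ^ (1/θ)) = Real.log p * y ^ (1/θ) := by rw [hcdef]; ring
    rw [hoeffPhi, Real.rpow_def_of_pos hp0, ← h1]
  rw [hrw]
  have hexp1 : (0:ℝ) < 1/θ := by positivity
  have hexp2 : (1:ℝ)/θ ≤ 1 := by rw [div_le_one hθ0]; linarith
  have hconc : ConcaveOn ℝ (Set.Ioc (0:ℝ) 1) (fun y : ℝ => c * y ^ (1/θ)) := by
    have h := ((Real.concaveOn_rpow hexp1.le hexp2).subset
      (fun x hx => le_of_lt hx.1) (convex_Ioc 0 1)).smul hc0.le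
    simpa [smul_eq_mul] using h
  have hposm : ∀ z ∈ Set.Ioc (0:ℝ) 1, 0 < c * z ^ (1/θ) := fun z hz =>
    mul_pos hc0 (Real.rpow_pos_of_pos hz.1 _)
  refine ⟨convex_Ioc 0 1, ?_⟩
  intro x hx y hy a b ha hb hab
  simp only [smul_eq_mul]
  have hx' := hposm x hx
  have hy' := hposm y hy
  have hxy : a * x + b * y ∈ Set.Ioc (0:ℝ) 1 := by
    have := (convex_Ioc (0:ℝ) 1) hx hy ha hb hab
    simpa [smul_eq_mul] using this
  have hcomb0 : 0 < a * (c * x ^ (1/θ)) + b * (c * y ^ (1/θ)) := by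
    rcases eq_or_lt_of_le ha with h | h
    · have hb1 : b = 1 := by linarith
      rw [← h, hb1]
      simpa using hy' 
    · have h1 : 0 < a * (c * x ^ (1/θ)) := mul_pos h hx'
      have h2 : 0 ≤ b * (c * y ^ (1/θ)) := mul_nonneg hb hy'.le
      linarith
  have hle : a * (c * x ^ (1/θ)) + b * (c * y ^ (1/θ)) ≤ c * (a * x + b * y) ^ (1/θ) := by
    have := hconc.2 hx hy ha hb hab
    simpa [smul_eq_mul] using this
  calc hoeffPhi (c * (a * x + b * y) ^ (1/θ))
      ≤ hoeffPhi (a * (c * x ^ (1/θ)) + b * (c * y ^ (1/θ))) :=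
        hoeffPhi_antitoneOn (Set.mem_Ioi.2 hcomb0) (Set.mem_Ioi.2 (hposm _ hxy)) hle
    _ ≤ a * hoeffPhi (c * x ^ (1/θ)) + b * hoeffPhi (c * y ^ (1/θ)) := by
        have := hoeffPhi_convexOn.2 (Set.mem_Ioi.2 hx') (Set.mem_Ioi.2 hy') ha hb hab
        simpa [smul_eq_mul] using this
end

section
/- Consider the JCCMDP setting under random running costs. Suppose the mean vectors μ_c, μ_{d^k} ∈ ℝ^𝒦 and covariance matrices Σ_c, Σ_{d^k} ∈ ℝ^{𝒦×𝒦} of the square-integrable random cost vectors c̃ and d̃^k are known, i.e., E[c̃] = μ_c, E[(c̃−μ_c)(c̃−μ_c)ᵀ] = Σ_c entrywise, and similarly for each d̃^k. For each k let B_k be a matrix with B_kᵀB_k = Σ_{d^k}, and let V_k* ∈ ℝ satisfy: for every ρ̄ ∈ Q^α(γ), V_k* ≥ Σ_{(s,a)∈𝒦} ρ̄(s,a) · ‖(B_k)_{(s,a)}‖₂, where (B_k)_{(s,a)} is the (s,a)-th column of B_k. Let p₀, p₁ ∈ (0,1), θ ≥ 1. If z ∈ ℝ, ρ ∈ Q^α(γ),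 and (y_k)_{k=1}^K with y_k ∈ (0,1] and Σ_k y_k = 1 satisfy ρᵀμ_c + √(p₀/(1−p₀)) · √(ρᵀΣ_c ρ) ≤ z and, for each k, ρᵀμ_{d^k} + √( p₁^{y_k^{1/θ}} / (1 − p₁^{y_k^{1/θ}}) ) · V_k* ≤ ξ_k, then ℙ(Σ_{(s,a)} ρ(s,a) c̃(s,a) ≤ z) ≥ p₀ and ℙ(Σ_{(s,a)} ρ(s,a) d̃^k(s,a) ≤ ξ_k) ≥ p₁^{y_k^{1/θ}} for every k. -/
open MeasureTheory ProbabilityTheory Matrix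

open scoped ENNReal NNReal

section Aux
variable {Ω : Type*} [MeasurableSpace Ω] {P : Measure Ω}

lemma integrable_mul2 {f g : Ω → ℝ} (hf : MemLp f 2 P) (hg : MemLp g 2 P) :
    Integrable (fun ω => f ω * g ω) P := by
  refine ((hf.integrable_sq.add hg.integrable_sq).const_mul (1/2 : ℝ)).mono'
    (hf.1.mul hg.1) ?_
  filter_upwards with ω
  simp only [Pi.add_apply]
  rw [Real.norm_eq_abs, abs_mul]
  nlinarith [sq_nonneg (|f ω| - |g ω|), sq_abs (f ω), sq_abs (g ω),
    abs_nonneg (f ω), abs_nonneg (g ω)]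

set_option maxHeartbeats 1000000 in
lemma cantelli (P : Measure Ω) [IsProbabilityMeasure P]
    {X : Ω → ℝ} (hX : MemLp X 2 P) {m σ2 v p z : ℝ}
    (hm : ∫ ω, X ω ∂P = m) (hσ : ∫ ω, (X ω - m)^2 ∂P = σ2)
    (hσv : Real.sqrt σ2 ≤ v) (hp : 0 < p) (hp1 : p < 1)
    (hz : m + Real.sqrt (p/(1-p)) * v ≤ z) :
    p ≤ (P {ω | X ω ≤ z}).toReal := by
  have h1p : (0:ℝ) < 1 - p := by linarith
  have hY : MemLp (fun ω => X ω - m) 2 P := hX.sub (memLp_const m)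
  have hY1 : Integrable (fun ω => X ω - m) P := hY.integrable one_le_two
  have hYsq : Integrable (fun ω => (X ω - m)^2) P := hY.integrable_sq
  have hσ0 : 0 ≤ σ2 := hσ ▸ integral_nonneg (fun ω => sq_nonneg _)
  have hEY : ∫ ω, (X ω - m) ∂P = 0 := by
    rw [integral_sub (hX.integrable one_le_two) (integrable_const m), hm]
    simp
  have hsp : 0 ≤ Real.sqrt (p/(1-p)) := Real.sqrt_nonneg _
  have hz' : m + Real.sqrt (p/(1-p)) * Real.sqrt σ2 ≤ z := by
    have := mul_le_mul_of_nonneg_left hσv hsp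
    linarith
  obtain ⟨t, ht⟩ : ∃ t, t = z - m := ⟨_, rfl⟩
  have htnn : Real.sqrt (p/(1-p)) * Real.sqrt σ2 ≤ t := by
    rw [ht]; linarith
  have ht0 : 0 ≤ t := le_trans (mul_nonneg hsp (Real.sqrt_nonneg _)) htnn
  by_cases hσz : σ2 = 0
  · -- degenerate case: X = m a.e.
    have hz0 : ∫ ω, (X ω - m)^2 ∂P = 0 := hσ.trans hσz
    have hae0 : ∀ᵐ ω ∂P, (X ω - m)^2 = 0 :=
      (integral_eq_zero_iff_of_nonneg (fun ω => sq_nonneg _) hYsq).mp hz0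
    have hae : ∀ᵐ ω ∂P, X ω ≤ z := by
      filter_upwards [hae0] with ω h
      have : X ω = m := by nlinarith [sq_nonneg (X ω - m)]
      have hmz : m ≤ z := by
        have : Real.sqrt σ2 = 0 := by rw [hσz, Real.sqrt_zero]
        rw [this] at hz'; linarith [hz']
      linarith
    have hcompl : P {ω | X ω ≤ z}ᶜ = 0 := by
      rw [ae_iff] at hae
      exact hae
    have h1le : (1 : ℝ≥0∞) ≤ P {ω | X ω ≤ z} := by
      have hu := measure_union_le (μ := P) {ω | X ω ≤ z} {ω | X ω ≤ z}ᶜ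
      rw [Set.union_compl_self, measure_univ, hcompl, add_zero] at hu
      exact hu
    have : P {ω | X ω ≤ z} = 1 := le_antisymm prob_le_one h1le
    rw [this]; simpa using hp1.le
  · have hσpos : 0 < σ2 := lt_of_le_of_ne hσ0 (Ne.symm hσz)
    have hdivpos : 0 < p / (1 - p) := div_pos hp h1p
    have htpos : 0 < t :=
      lt_of_lt_of_le (mul_pos (Real.sqrt_pos.mpr hdivpos) (Real.sqrt_pos.mpr hσpos)) htnn
    obtain ⟨u, hu⟩ : ∃ u, u = σ2 / t := ⟨_, rfl⟩
    have hupos : 0 < u := by rw [hu]; exact div_pos hσpos htpos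
    have hdecomp : (fun ω => (X ω - m + u)^2)
        = fun ω => (X ω - m)^2 + (2*u)*(X ω - m) + u^2 := by
      funext ω; ring
    have hg_int : Integrable (fun ω => (X ω - m + u)^2) P := by
      rw [hdecomp]
      exact (hYsq.add (hY1.const_mul (2*u))).add (integrable_const _)
    have i2 : Integrable (fun ω => (2*u)*(X ω - m)) P := hY1.const_mul (2*u)
    have i1 : Integrable (fun ω => (X ω - m)^2 + (2*u)*(X ω - m)) P := hYsq.add i2
    have hg_val : ∫ ω, (X ω - m + u)^2 ∂P = σ2 + u^2 := by
      rw [hdecomp, integral_add i1 (integrable_const _),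
        integral_add hYsq i2, integral_const_mul, hEY, hσ]
      simp
    have hmarkov := mul_meas_ge_le_integral_of_nonneg (μ := P)
      (f := fun ω => (X ω - m + u)^2)
      (Filter.Eventually.of_forall fun ω => sq_nonneg _) hg_int ((t+u)^2)
    rw [hg_val] at hmarkov
    have hsub : {ω | z < X ω} ⊆ {ω | (t+u)^2 ≤ (X ω - m + u)^2} := by
      intro ω hω
      simp only [Set.mem_setOf_eq] at hω ⊢
      have h1 : t + u ≤ X ω - m + u := by rw [ht]; linarith
      exact pow_le_pow_left₀ (by positivity) h1 2
    have htu : (0:ℝ) < (t+u)^2 := by positivity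
    have hb : (P {ω | z < X ω}).toReal ≤ (σ2 + u^2)/((t+u)^2) := by
      have hmono : (P {ω | z < X ω}).toReal
          ≤ (P {ω | (t+u)^2 ≤ (X ω - m + u)^2}).toReal :=
        ENNReal.toReal_mono (measure_ne_top P _) (measure_mono hsub)
      rw [le_div_iff₀ htu, mul_comm]
      exact le_trans (mul_le_mul_of_nonneg_left hmono htu.le) hmarkov
    have hsum : 1 ≤ (P {ω | X ω ≤ z}).toReal + (P {ω | z < X ω}).toReal := by
      have huniv : (Set.univ : Set Ω) = {ω | X ω ≤ z} ∪ {ω | z < X ω} := by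
        ext ω; simp [le_or_gt]
      have hle : (1:ℝ≥0∞) ≤ P {ω | X ω ≤ z} + P {ω | z < X ω} := by
        rw [← measure_univ (μ := P), huniv]
        exact measure_union_le _ _
      have := ENNReal.toReal_mono (by
        exact ENNReal.add_ne_top.mpr ⟨measure_ne_top P _, measure_ne_top P _⟩) hle
      rwa [ENNReal.toReal_one, ENNReal.toReal_add (measure_ne_top P _) (measure_ne_top P _)]
        at this
    have ht2 : p * σ2 ≤ (1-p) * t^2 := by
      have hsq := mul_le_mul htnn htnn (mul_nonneg hsp (Real.sqrt_nonneg _)) ht0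
      have : (Real.sqrt (p/(1-p)) * Real.sqrt σ2) * (Real.sqrt (p/(1-p)) * Real.sqrt σ2)
          = (p/(1-p)) * σ2 := by
        rw [mul_mul_mul_comm, Real.mul_self_sqrt hdivpos.le, Real.mul_self_sqrt hσ0]
      rw [this] at hsq
      rw [div_mul_eq_mul_div, div_le_iff₀ h1p] at hsq
      nlinarith [hsq]
    have hq : (σ2 + u^2)/((t+u)^2) ≤ 1 - p := by
      have hut : u * t = σ2 := by
        rw [hu]; field_simp
      have h5 : p * u ≤ (1-p) * t := by
        rw [hu, mul_div_assoc', div_le_iff₀ htpos]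
        nlinarith [ht2]
      have h6 : u ≤ (1-p)*(t+u) := by nlinarith [h5]
      rw [div_le_iff₀ htu]
      nlinarith [mul_le_mul_of_nonneg_right h6 (by positivity : (0:ℝ) ≤ t+u), hut]
    linarith
end Aux

section Var
variable {Ω : Type*} [MeasurableSpace Ω] (P : Measure Ω) [IsProbabilityMeasure P]
  {K : Type*} [Fintype K]

lemma mean_sum (c : Ω → K → ℝ) (μc : K → ℝ)
    (hc2 : ∀ j, MemLp (fun ω => c ω j) 2 P)
    (hμ : ∀ j, ∫ ω, c ω j ∂P = μc j) (ρ : K → ℝ) :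
    ∫ ω, (∑ j, ρ j * c ω j) ∂P = ∑ j, ρ j * μc j := by
  rw [integral_finset_sum _ fun j _ =>
    (((hc2 j).integrable one_le_two).const_mul (ρ j))]
  exact Finset.sum_congr rfl fun j _ => by rw [integral_const_mul, hμ j]

lemma memLp_sum (c : Ω → K → ℝ) (hc2 : ∀ j, MemLp (fun ω => c ω j) 2 P) (ρ : K → ℝ) :
    MemLp (fun ω => ∑ j, ρ j * c ω j) 2 P :=
  memLp_finset_sum _ fun j _ => (hc2 j).const_mul (ρ j)

lemma var_sum (c : Ω → K → ℝ) (μc : K → ℝ) (Cov : Matrix K K ℝ)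
    (hc2 : ∀ j, MemLp (fun ω => c ω j) 2 P)
    (hCov : ∀ i j, ∫ ω, (c ω i - μc i) * (c ω j - μc j) ∂P = Cov i j) (ρ : K → ℝ) :
    ∫ ω, (∑ j, ρ j * c ω j - ∑ j, ρ j * μc j)^2 ∂P = ∑ i, ∑ j, ρ i * Cov i j * ρ j := by
  have hY : ∀ j, MemLp (fun ω => c ω j - μc j) 2 P :=
    fun j => (hc2 j).sub (memLp_const (μc j))
  have hint : ∀ i j : K, Integrable
      (fun ω => (ρ i * ρ j) * ((c ω i - μc i) * (c ω j - μc j))) P :=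
    fun i j => (integrable_mul2 (hY i) (hY j)).const_mul _
  have hexp : ∀ ω, (∑ j, ρ j * c ω j - ∑ j, ρ j * μc j)^2
      = ∑ i, ∑ j, (ρ i * ρ j) * ((c ω i - μc i) * (c ω j - μc j)) := by
    intro ω
    have h1 : ∑ j, ρ j * c ω j - ∑ j, ρ j * μc j
        = ∑ j, ρ j * (c ω j - μc j) := by
      rw [← Finset.sum_sub_distrib]
      exact Finset.sum_congr rfl fun j _ => by ring
    rw [h1, sq, Finset.sum_mul_sum]
    exact Finset.sum_congr rfl fun i _ => Finset.sum_congr rfl fun j _ => by ring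
  simp_rw [hexp]
  rw [integral_finset_sum _ fun i _ => integrable_finset_sum _ fun j _ => hint i j]
  refine Finset.sum_congr rfl fun i _ => ?_
  rw [integral_finset_sum _ fun j _ => hint i j]
  refine Finset.sum_congr rfl fun j _ => ?_
  rw [integral_const_mul, hCov i j]
  ring

end Var

lemma sqrt_sum_sq_le {K : Type*} [Fintype K] (B : Matrix K K ℝ) (ρ : K → ℝ)
    (hρ : ∀ j, 0 ≤ ρ j) :
    Real.sqrt (∑ l, (∑ j, ρ j * B l j)^2)
      ≤ ∑ j, ρ j * Real.sqrt (∑ i, (B i j)^2) := by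
  classical
  set L := WithLp.linearEquiv 2 ℝ (K → ℝ) with hL
  have hfun : (fun l => ∑ j, ρ j * B l j) = ∑ j, ρ j • (fun l => B l j) := by
    funext l; simp [Finset.sum_apply]
  calc Real.sqrt (∑ l, (∑ j, ρ j * B l j)^2)
      = ‖(L.symm (fun l => ∑ j, ρ j * B l j) : EuclideanSpace ℝ K)‖ := by
        rw [EuclideanSpace.norm_eq]
        congr 1
        refine Finset.sum_congr rfl fun l _ => ?_
        simp [hL, WithLp.linearEquiv, WithLp.coe_symm_linearEquiv, PiLp.toLp_apply, Real.norm_eq_abs, sq_abs]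
    _ = ‖∑ j, ρ j • (L.symm (fun l => B l j) : EuclideanSpace ℝ K)‖ := by
        rw [hfun, map_sum]
        simp_rw [_root_.map_smul]
    _ ≤ ∑ j, ‖ρ j • (L.symm (fun l => B l j) : EuclideanSpace ℝ K)‖ := norm_sum_le _ _
    _ ≤ ∑ j, ρ j * Real.sqrt (∑ i, (B i j)^2) := by
        refine Finset.sum_le_sum fun j _ => ?_
        rw [norm_smul, Real.norm_eq_abs, abs_of_nonneg (hρ j), EuclideanSpace.norm_eq]
        apply le_of_eq
        have hs : ∑ i, ‖(L.symm (fun l => B l j) : EuclideanSpace ℝ K) i‖^2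
            = ∑ i, (B i j)^2 := by
          refine Finset.sum_congr rfl fun i _ => ?_
          simp [hL, WithLp.linearEquiv, WithLp.coe_symm_linearEquiv, PiLp.toLp_apply, Real.norm_eq_abs, sq_abs]
        rw [hs]

/-- The set `Q^α(γ)` of discounted occupation measures of a CMDP:
`K` is the finite set of state-action pairs, `st` maps a pair to its state,
`Pr k s'` is the transition probability from pair `k` to state `s'`. -/
def Qset {S K : Type*} [Fintype K] [DecidableEq S]
    (st : K → S) (Pr : K → S → ℝ) (α : ℝ) (γ : S → ℝ) : Set (K → ℝ) :=
  {ρ | (∀ k, 0 ≤ ρ k) ∧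
    ∀ s' : S, ∑ k, ρ k * ((if st k = s' then (1 : ℝ) else 0) - α * Pr k s')
      = (1 - α) * γ s'}

/-- Chebyshev-based convex upper bound approximation for the JCCMDP problem under
random running costs (Theorem 5, part 1). -/
theorem jccmdp_chebyshev_upper_bound
    {Ω : Type*} [MeasurableSpace Ω] (P : Measure Ω) [IsProbabilityMeasure P]
    {S K : Type*} [Fintype S] [Fintype K] [DecidableEq S]
    (st : K → S) (Pr : K → S → ℝ) (α : ℝ) (hα : α ∈ Set.Ioo (0 : ℝ) 1)
    (γ : S → ℝ)
    {NK : ℕ} (c : Ω → K → ℝ) (d : Fin NK → Ω → K → ℝ)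
    (μc : K → ℝ) (μd : Fin NK → K → ℝ)
    (Covc : Matrix K K ℝ) (Covd : Fin NK → Matrix K K ℝ)
    (hc2 : ∀ j, MemLp (fun ω => c ω j) 2 P)
    (hd2 : ∀ k j, MemLp (fun ω => d k ω j) 2 P)
    (hμc : ∀ j, ∫ ω, c ω j ∂P = μc j)
    (hμd : ∀ k j, ∫ ω, d k ω j ∂P = μd k j)
    (hCovc : ∀ i j, ∫ ω, (c ω i - μc i) * (c ω j - μc j) ∂P = Covc i j)
    (hCovd : ∀ k i j, ∫ ω, (d k ω i - μd k i) * (d k ω j - μd k j) ∂P = Covd k i j)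
    (B : Fin NK → Matrix K K ℝ) (hB : ∀ k, (B k)ᵀ * B k = Covd k)
    (Vstar : Fin NK → ℝ)
    (hV : ∀ k, ∀ ρ' ∈ Qset st Pr α γ,
      ∑ j, ρ' j * Real.sqrt (∑ i, (B k i j) ^ 2) ≤ Vstar k)
    (p0 p1 θ : ℝ) (hp0 : p0 ∈ Set.Ioo (0 : ℝ) 1) (hp1 : p1 ∈ Set.Ioo (0 : ℝ) 1)
    (hθ : 1 ≤ θ) (ξ : Fin NK → ℝ)
    (z : ℝ) (ρ : K → ℝ) (hρ : ρ ∈ Qset st Pr α γ)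
    (y : Fin NK → ℝ) (hy : ∀ k, y k ∈ Set.Ioc (0 : ℝ) 1) (hysum : ∑ k, y k = 1)
    (hobj : ∑ j, ρ j * μc j +
      Real.sqrt (p0 / (1 - p0)) * Real.sqrt (∑ i, ∑ j, ρ i * Covc i j * ρ j) ≤ z)
    (hconstr : ∀ k, ∑ j, ρ j * μd k j +
      Real.sqrt (p1 ^ (y k ^ (1 / θ)) / (1 - p1 ^ (y k ^ (1 / θ)))) * Vstar k ≤ ξ k) :
    p0 ≤ (P {ω | ∑ j, ρ j * c ω j ≤ z}).toReal ∧
    ∀ k, p1 ^ (y k ^ (1 / θ)) ≤ (P {ω | ∑ j, ρ j * d k ω j ≤ ξ k}).toReal := by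
  have hρnn := hρ.1
  constructor
  · exact cantelli P (memLp_sum P c hc2 ρ) (mean_sum P c μc hc2 hμc ρ)
      (var_sum P c μc Covc hc2 hCovc ρ) le_rfl hp0.1 hp0.2 hobj
  · intro k
    have he : 0 < y k ^ (1/θ) := Real.rpow_pos_of_pos (hy k).1 _
    have hp : 0 < p1 ^ (y k ^ (1/θ)) := Real.rpow_pos_of_pos hp1.1 _
    have hplt : p1 ^ (y k ^ (1/θ)) < 1 := Real.rpow_lt_one hp1.1.le hp1.2 he
    have h1 : ∀ i j, ρ i * Covd k i j * ρ j
        = ∑ l, (ρ i * B k l i) * (ρ j * B k l j) := by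
      intro i j
      rw [← hB k, Matrix.mul_apply]
      simp only [Matrix.transpose_apply]
      rw [Finset.mul_sum, Finset.sum_mul]
      exact Finset.sum_congr rfl fun l _ => by ring
    have hCeq : ∑ i, ∑ j, ρ i * Covd k i j * ρ j
        = ∑ l, (∑ j, ρ j * B k l j)^2 := by
      calc ∑ i, ∑ j, ρ i * Covd k i j * ρ j
          = ∑ i, ∑ j, ∑ l, (ρ i * B k l i) * (ρ j * B k l j) :=
            Finset.sum_congr rfl fun i _ => Finset.sum_congr rfl fun j _ => h1 i j
        _ = ∑ i, ∑ l, ∑ j, (ρ i * B k l i) * (ρ j * B k l j) :=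
            Finset.sum_congr rfl fun i _ => Finset.sum_comm
        _ = ∑ l, ∑ i, ∑ j, (ρ i * B k l i) * (ρ j * B k l j) := Finset.sum_comm
        _ = ∑ l, (∑ j, ρ j * B k l j)^2 := by
            refine Finset.sum_congr rfl fun l _ => ?_
            rw [sq, Finset.sum_mul_sum]
    have hσv : Real.sqrt (∑ i, ∑ j, ρ i * Covd k i j * ρ j) ≤ Vstar k := by
      rw [hCeq]
      exact le_trans (sqrt_sum_sq_le (B k) ρ hρnn) (hV k ρ ⟨hρnn, hρ.2⟩)
    exact cantelli P (memLp_sum P (d k) (hd2 k) ρ)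
      (mean_sum P (d k) (μd k) (hd2 k) (hμd k) ρ)
      (var_sum P (d k) (μd k) (Covd k) (hd2 k) (hCovd k) ρ) hσv hp hplt (hconstr k)
end

section
/- Consider the JCCMDP setting under random running costs. Suppose the components of c̃ are independent with mean vector μ_c and almost-sure bounds c̃^l(s,a) ≤ c̃(s,a) ≤ c̃^u(s,a), and for each k the components of d̃^k are independent with mean vector μ_{d^k} and almost-sure bounds d̃^{kl}(s,a) ≤ d̃^k(s,a) ≤ d̃^{ku}(s,a). Let p₀ ∈ (0,1), p₁ ∈ [1 − e^{−1/2}, 1), θ ≥ 1, and let V_k* ∈ ℝ satisfy: for every ρ̄ ∈ Q^α(γ), V_k* ≥ Σ_{(s,a)∈𝒦} ρ̄(s,a)·(d̃^{ku}(s,a) − d̃^{kl}(s,a)). If z ∈ ℝ, ρ ∈ Q^α(γ), and (y_k)_{k=1}^K with y_k ∈ (0,1] and Σ_k y_k = 1 satisfy ρᵀμ_c + √(−(1/2)ln(1−p₀)) · √(Σ_{(s,a)} ρ(s,a)²(c̃^u(s,a) − c̃^l(s,a))²) ≤ z and, for each k, ρᵀμ_{d^k} + √(−(1/2)·ln(1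 − p₁^{y_k^{1/θ}})) · V_k* ≤ ξ_k, then ℙ(Σ_{(s,a)} ρ(s,a) c̃(s,a) ≤ z) ≥ p₀ and ℙ(Σ_{(s,a)} ρ(s,a) d̃^k(s,a) ≤ ξ_k) ≥ p₁^{y_k^{1/θ}} for every k. -/
open MeasureTheory ProbabilityTheory

lemma key_ineq {p : ℝ} (hp : p ∈ Set.Icc (0:ℝ) 1) (u : ℝ) :
    (1 - p) + p * Real.exp u ≤ Real.exp (p * u + u ^ 2 / 8) := by
  obtain ⟨hp0, hp1⟩ := hp
  rcases eq_or_lt_of_le hp0 with h0 | h0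
  · simp only [← h0, zero_mul, sub_zero, zero_add, mul_zero, add_zero]
    exact Real.one_le_exp (by positivity)
  rcases eq_or_lt_of_le hp1 with h1 | h1
  · simp only [h1, sub_self, zero_add, one_mul, one_mul]
    exact Real.exp_le_exp.2 (by nlinarith [sq_nonneg u])
  -- 0 < p < 1
  obtain ⟨g, hgdef⟩ : ∃ g : ℝ → ℝ, g = fun u => 1 - p + p * Real.exp u := ⟨_, rfl⟩
  have hg : ∀ v : ℝ, 0 < g v := fun v => by
    have := Real.exp_pos v; rw [hgdef]; beta_reduce; nlinarith
  obtain ⟨f, hfdef⟩ : ∃ f : ℝ → ℝ, f = fun v => p * v + v ^ 2 / 8 - Real.log (g v) := ⟨_, rfl⟩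
  obtain ⟨f', hf'def⟩ : ∃ f' : ℝ → ℝ, f' = fun v => p + v / 4 - p * Real.exp v / g v := ⟨_, rfl⟩
  have hgd : ∀ v : ℝ, HasDerivAt g (p * Real.exp v) v := fun v => by
    rw [hgdef]
    simpa using ((Real.hasDerivAt_exp v).const_mul p).const_add (1 - p)
  have hfd : ∀ v : ℝ, HasDerivAt f (f' v) v := fun v => by
    have h1 : HasDerivAt (fun v : ℝ => p * v + v ^ 2 / 8) (p + 2 * v / 8) v := by
      have := ((hasDerivAt_id v).const_mul p).add
        (((hasDerivAt_pow 2 v)).div_const 8)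
      exact this.congr_deriv (by norm_num)
    have h2 : HasDerivAt (fun v => Real.log (g v)) (p * Real.exp v / g v) v :=
      (hgd v).log (hg v).ne'
    rw [hfdef, hf'def]
    have := h1.sub h2
    refine this.congr_deriv ?_
    show _ = p + v / 4 - p * Real.exp v / g v
    ring
  have hfd' : ∀ v : ℝ, HasDerivAt f' (1/4 - p * (1 - p) * Real.exp v / (g v) ^ 2) v := by
    intro v
    have h2 : HasDerivAt (fun v => p * Real.exp v / g v)
        ((p * Real.exp v * g v - p * Real.exp v * (p * Real.exp v)) / (g v) ^ 2) v :=
      ((Real.hasDerivAt_exp v).const_mul p).div (hgd v) (hg v).ne'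
    have h1 : HasDerivAt (fun v : ℝ => p + v / 4) (1 / 4) v := by
      simpa using ((hasDerivAt_id v).div_const 4).const_add p
    rw [hf'def]
    have h3 := h1.sub h2
    refine h3.congr_deriv ?_
    have h5 : p * Real.exp v * g v - p * Real.exp v * (p * Real.exp v)
        = p * (1 - p) * Real.exp v := by rw [hgdef]; ring
    rw [h5]
  have hf'mono : Monotone f' := by
    apply monotone_of_hasDerivAt_nonneg hfd'
    intro v
    show (0:ℝ) ≤ 1 / 4 - p * (1 - p) * Real.exp v / g v ^ 2
    have hgv := hg v
    have hev := Real.exp_pos v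
    have key : 4 * (p * (1 - p) * Real.exp v) ≤ (g v) ^ 2 := by
      have := sq_nonneg ((1 - p) - p * Real.exp v)
      rw [hgdef]; beta_reduce; nlinarith
    have h4 : p * (1 - p) * Real.exp v / (g v) ^ 2 ≤ 1 / 4 := by
      rw [div_le_iff₀ (by positivity)]; nlinarith
    linarith
  have hf'0 : f' 0 = 0 := by rw [hf'def, hgdef]; simp
  have hf0 : f 0 = 0 := by rw [hfdef, hgdef]; simp
  have hfnonneg : ∀ v : ℝ, 0 ≤ f v := by
    intro v
    rcases le_total 0 v with hv | hv
    · have hmono : MonotoneOn f (Set.Ici (0:ℝ)) := by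
        apply monotoneOn_of_hasDerivWithinAt_nonneg (convex_Ici 0)
          (fun x _ => (hfd x).continuousAt.continuousWithinAt)
          (fun x _ => (hfd x).hasDerivWithinAt)
        intro x hx
        rw [interior_Ici] at hx
        have := hf'mono (le_of_lt hx)
        rw [hf'0] at this; exact this
      have := hmono Set.self_mem_Ici hv hv
      rwa [hf0] at this
    · have hanti : AntitoneOn f (Set.Iic (0:ℝ)) := by
        apply antitoneOn_of_hasDerivWithinAt_nonpos (convex_Iic 0)
          (fun x _ => (hfd x).continuousAt.continuousWithinAt)
          (fun x _ => (hfd x).hasDerivWithinAt)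
        intro x hx
        rw [interior_Iic] at hx
        have := hf'mono (le_of_lt hx)
        rw [hf'0] at this; exact this
      have := hanti hv Set.self_mem_Iic hv
      rwa [hf0] at this
  have := hfnonneg u
  have hlog : Real.log (g u) ≤ p * u + u ^ 2 / 8 := by
    rw [hfdef] at this; simp only at this; linarith
  have hfin := (Real.log_le_iff_le_exp (hg u)).1 hlog
  rw [hgdef] at hfin
  exact hfin


section aux
variable {Ω : Type*} [MeasurableSpace Ω] {μ : Measure Ω} [IsProbabilityMeasure μ]

lemma integrable_of_icc {X : Ω → ℝ} (hX : Measurable X) {a b : ℝ}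
    (hab : ∀ᵐ ω ∂μ, X ω ∈ Set.Icc a b) : Integrable X μ := by
  refine Integrable.mono' (integrable_const (max |a| |b|)) hX.aestronglyMeasurable ?_
  filter_upwards [hab] with ω hω
  rw [Real.norm_eq_abs, abs_le]
  constructor
  · calc -(max |a| |b|) ≤ -|a| := by simp
      _ ≤ a := neg_abs_le a
      _ ≤ X ω := hω.1
  · calc X ω ≤ b := hω.2
      _ ≤ |b| := le_abs_self b
      _ ≤ max |a| |b| := le_max_right _ _

lemma integrable_exp_of_icc {X : Ω → ℝ} (hX : Measurable X) {a b : ℝ}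
    (hab : ∀ᵐ ω ∂μ, X ω ∈ Set.Icc a b) (t : ℝ) :
    Integrable (fun ω => Real.exp (t * X ω)) μ := by
  refine Integrable.mono' (integrable_const (Real.exp (max (t*a) (t*b))))
    (Real.measurable_exp.comp (hX.const_mul t)).aestronglyMeasurable ?_
  filter_upwards [hab] with ω hω
  rw [Real.norm_eq_abs, abs_of_pos (Real.exp_pos _), Real.exp_le_exp]
  rcases le_total 0 t with ht | ht
  · exact le_max_of_le_right (mul_le_mul_of_nonneg_left hω.2 ht)
  · exact le_max_of_le_left (mul_le_mul_of_nonpos_left hω.1 ht)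

lemma mgf_le_of_icc {X : Ω → ℝ} (hX : Measurable X) {a b : ℝ}
    (hab : ∀ᵐ ω ∂μ, X ω ∈ Set.Icc a b) (t : ℝ) :
    mgf X μ t ≤ Real.exp (t * (∫ ω, X ω ∂μ) + t ^ 2 * (b - a) ^ 2 / 8) := by
  have hXint := integrable_of_icc hX hab
  obtain ⟨m, hm⟩ : ∃ m : ℝ, m = ∫ ω, X ω ∂μ := ⟨_, rfl⟩
  rw [← hm]
  have ham : a ≤ m := by
    rw [hm]
    have := integral_mono_ae (integrable_const a) hXint (hab.mono fun ω h => h.1)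
    simpa using this
  have hmb : m ≤ b := by
    rw [hm]
    have := integral_mono_ae hXint (integrable_const b) (hab.mono fun ω h => h.2)
    simpa using this
  rcases eq_or_lt_of_le (ham.trans hmb) with hba | hba
  · -- degenerate case a = b
    have hma : m = a := le_antisymm (hmb.trans hba.symm.le) ham
    have hXa : ∀ᵐ ω ∂μ, X ω = a :=
      hab.mono fun ω h => le_antisymm (h.2.trans hba.symm.le) h.1
    have : mgf X μ t = Real.exp (t * a) := by
      rw [mgf]
      rw [integral_congr_ae (hXa.mono fun ω h => by rw [h])]
      simp
    rw [this, hma, ← hba]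
    apply Real.exp_le_exp.2
    nlinarith [sq_nonneg (t * (a - a))]
  · -- main case a < b
    have hba' : (0:ℝ) < b - a := sub_pos.2 hba
    obtain ⟨p, hpdef⟩ : ∃ p : ℝ, p = (m - a) / (b - a) := ⟨_, rfl⟩
    have hp : p ∈ Set.Icc (0:ℝ) 1 := by
      rw [hpdef]
      constructor
      · exact div_nonneg (by linarith) hba'.le
      · rw [div_le_one hba']; linarith
    have h1 : Integrable (fun ω => (b - X ω) * Real.exp (t * a)) μ :=
      ((integrable_const b).sub hXint).mul_const _
    have h2 : Integrable (fun ω => (X ω - a) * Real.exp (t * b)) μ :=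
      (hXint.sub (integrable_const a)).mul_const _
    have hpt : ∀ᵐ ω ∂μ, Real.exp (t * X ω) ≤
        ((b - X ω) * Real.exp (t * a) + (X ω - a) * Real.exp (t * b)) / (b - a) := by
      filter_upwards [hab] with ω hω
      have hlam : (0:ℝ) ≤ (b - X ω) / (b - a) := div_nonneg (by linarith [hω.2]) hba'.le
      have hmu : (0:ℝ) ≤ (X ω - a) / (b - a) := div_nonneg (by linarith [hω.1]) hba'.le
      have hsum : (b - X ω) / (b - a) + (X ω - a) / (b - a) = 1 := by
        field_simp
        ring
      have hcx := convexOn_exp.2 (Set.mem_univ (t * a)) (Set.mem_univ (t * b))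
        hlam hmu hsum
      have harg : ((b - X ω) / (b - a)) • (t * a) + ((X ω - a) / (b - a)) • (t * b)
          = t * X ω := by
        simp only [smul_eq_mul]
        field_simp
        ring
      rw [harg] at hcx
      refine hcx.trans (le_of_eq ?_)
      simp only [smul_eq_mul]
      rw [div_mul_eq_mul_div, div_mul_eq_mul_div, ← add_div]
    have h3 : Integrable (fun ω => ((b - X ω) * Real.exp (t * a)
        + (X ω - a) * Real.exp (t * b)) / (b - a)) μ := (h1.add h2).div_const _
    have hint : mgf X μ t ≤ ((b - m) * Real.exp (t * a) + (m - a) * Real.exp (t * b)) / (b - a) := by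
      rw [mgf]
      have := integral_mono_ae (integrable_exp_of_icc hX hab t) h3 hpt
      refine this.trans (le_of_eq ?_)
      rw [integral_div, integral_add h1 h2, integral_mul_const, integral_mul_const,
        integral_sub (integrable_const b) hXint, integral_sub hXint (integrable_const a)]
      simp [hm]
    refine hint.trans ?_
    have e1 : ((b - m) * Real.exp (t * a) + (m - a) * Real.exp (t * b)) / (b - a)
        = Real.exp (t * a) * ((1 - p) + p * Real.exp (t * (b - a))) := by
      have hexp : Real.exp (t * b) = Real.exp (t * a) * Real.exp (t * (b - a)) := by
        rw [← Real.exp_add]; ring_nf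
      rw [hexp, hpdef]
      field_simp
      ring
    rw [e1]
    have e2 := key_ineq hp (t * (b - a))
    calc Real.exp (t * a) * ((1 - p) + p * Real.exp (t * (b - a)))
        ≤ Real.exp (t * a) * Real.exp (p * (t * (b - a)) + (t * (b - a)) ^ 2 / 8) := by
          exact mul_le_mul_of_nonneg_left e2 (Real.exp_pos _).le
      _ = Real.exp (t * m + t ^ 2 * (b - a) ^ 2 / 8) := by
          rw [← Real.exp_add]
          congr 1
          have hpba : p * (b - a) = m - a := by
            rw [hpdef]; field_simp
          have : p * (t * (b - a)) = t * (m - a) := by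
            rw [show p * (t * (b - a)) = t * (p * (b - a)) by ring, hpba]
          rw [this]; ring
end aux

lemma hoeffding_prob {Ω ι : Type*} [MeasurableSpace Ω] [Fintype ι] {μ : Measure Ω}
    [IsProbabilityMeasure μ]
    {X : ι → Ω → ℝ} (hX : ∀ i, Measurable (X i))
    (hind : iIndepFun X μ)
    {a b : ι → ℝ} (hab : ∀ i, ∀ᵐ ω ∂μ, X i ω ∈ Set.Icc (a i) (b i))
    {q z : ℝ} (hq : q ∈ Set.Ioo (0:ℝ) 1)
    (hz : (∑ i, ∫ ω, X i ω ∂μ) +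
      Real.sqrt (-(1/2) * Real.log (1 - q)) * Real.sqrt (∑ i, (b i - a i) ^ 2) ≤ z) :
    q ≤ (μ {ω | ∑ i, X i ω ≤ z}).toReal := by
  obtain ⟨M, hM⟩ : ∃ M : ℝ, M = ∑ i, ∫ ω, X i ω ∂μ := ⟨_, rfl⟩
  obtain ⟨V, hV⟩ : ∃ V : ℝ, V = ∑ i, (b i - a i) ^ 2 := ⟨_, rfl⟩
  obtain ⟨κ, hκdef⟩ : ∃ κ : ℝ, κ = -(1/2) * Real.log (1 - q) := ⟨_, rfl⟩
  rw [← hM, ← hV, ← hκdef] at hz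
  have hq1 : (0:ℝ) < 1 - q := by linarith [hq.2]
  have hκ : 0 < κ := by
    rw [hκdef]
    have : Real.log (1 - q) < 0 := Real.log_neg hq1 (by linarith [hq.1])
    linarith
  have hV0 : 0 ≤ V := hV ▸ Finset.sum_nonneg fun i _ => sq_nonneg _
  have hEmeas : MeasurableSet {ω | ∑ i, X i ω ≤ z} :=
    measurableSet_le (Finset.measurable_sum _ fun i _ => hX i) measurable_const
  rcases eq_or_lt_of_le hV0 with hVz | hVpos
  · -- degenerate case V = 0
    have hba : ∀ i, b i = a i := by
      intro i
      have h0 : ∑ i, (b i - a i) ^ 2 = 0 := by rw [← hV, ← hVz]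
      have := (Finset.sum_eq_zero_iff_of_nonneg (fun i _ => sq_nonneg (b i - a i))).1 h0
        i (Finset.mem_univ i)
      have := pow_eq_zero_iff (n := 2) (by norm_num) |>.1 this
      linarith [sub_eq_zero.1 this]
    have hMz : M ≤ z := by
      rw [← hVz, Real.sqrt_zero, mul_zero, add_zero] at hz
      exact hz
    have hae : ∀ᵐ ω ∂μ, ∑ i, X i ω ≤ z := by
      have h1 : ∀ᵐ ω ∂μ, ∀ i, X i ω = a i := by
        rw [MeasureTheory.ae_all_iff]
        intro i
        filter_upwards [hab i] with ω hω
        exact le_antisymm (hba i ▸ hω.2) hω.1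
      filter_upwards [h1] with ω hω
      have : ∑ i, X i ω = ∑ i, a i := Finset.sum_congr rfl fun i _ => hω i
      rw [this]
      have hMa : M = ∑ i, a i := by
        rw [hM]
        refine Finset.sum_congr rfl fun i _ => ?_
        have h2 : ∀ᵐ ω ∂μ, X i ω = a i := by
          filter_upwards [hab i] with ω hω
          exact le_antisymm (hba i ▸ hω.2) hω.1
        rw [integral_congr_ae (h2.mono fun ω h => h)]
        simp
      linarith
    have : μ {ω | ∑ i, X i ω ≤ z} = 1 := by
      rw [← measure_univ (μ := μ)]
      apply measure_congr
      rw [MeasureTheory.ae_eq_univ]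
      rw [show {ω | ∑ i, X i ω ≤ z}ᶜ = {ω | ¬ (∑ i, X i ω ≤ z)} from rfl]
      exact hae
    rw [this]
    simp
    exact hq.2.le
  · -- main case V > 0
    obtain ⟨ε, hεdef⟩ : ∃ ε : ℝ, ε = z - M := ⟨_, rfl⟩
    have hε : Real.sqrt κ * Real.sqrt V ≤ ε := by rw [hεdef]; linarith
    have hεpos : 0 < ε :=
      lt_of_lt_of_le (mul_pos (Real.sqrt_pos.2 hκ) (Real.sqrt_pos.2 hVpos)) hε
    have hκV : κ * V ≤ ε ^ 2 := by
      have h1 : Real.sqrt (κ * V) ≤ ε := by rwa [Real.sqrt_mul hκ.le]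
      have h2 : κ * V = Real.sqrt (κ * V) ^ 2 :=
        (Real.sq_sqrt (mul_nonneg hκ.le hV0)).symm
      rw [h2]
      exact pow_le_pow_left₀ (Real.sqrt_nonneg _) h1 2
    obtain ⟨t, htdef⟩ : ∃ t : ℝ, t = 4 * ε / V := ⟨_, rfl⟩
    have ht : 0 ≤ t := htdef ▸ div_nonneg (by linarith) hV0
    have hints : ∀ i, Integrable (fun ω => Real.exp (t * X i ω)) μ :=
      fun i => integrable_exp_of_icc (hX i) (hab i) t
    have hSint : Integrable (fun ω => Real.exp (t * (∑ i, X i) ω)) μ :=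
      hind.integrable_exp_mul_sum hX fun i _ => hints i
    have key := measure_ge_le_exp_mul_mgf (μ := μ) (X := ∑ i, X i) z ht hSint
    have hmgfsum : mgf (∑ i, X i) μ t = ∏ i, mgf (X i) μ t := hind.mgf_sum hX Finset.univ
    have hmgfbd : ∏ i, mgf (X i) μ t ≤ Real.exp (t * M + t ^ 2 * V / 8) := by
      calc ∏ i, mgf (X i) μ t
          ≤ ∏ i, Real.exp (t * (∫ ω, X i ω ∂μ) + t ^ 2 * (b i - a i) ^ 2 / 8) := by
            refine Finset.prod_le_prod (fun i _ => mgf_nonneg) fun i _ => ?_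
            exact mgf_le_of_icc (hX i) (hab i) t
        _ = Real.exp (∑ i, (t * (∫ ω, X i ω ∂μ) + t ^ 2 * (b i - a i) ^ 2 / 8)) :=
            (Real.exp_sum _ _).symm
        _ = Real.exp (t * M + t ^ 2 * V / 8) := by
            rw [hM, hV]
            congr 1
            rw [Finset.sum_add_distrib, ← Finset.mul_sum, ← Finset.sum_div,
              ← Finset.mul_sum]
    have hexp : Real.exp (-t * z) * mgf (∑ i, X i) μ t ≤ 1 - q := by
      rw [hmgfsum]
      calc Real.exp (-t * z) * ∏ i, mgf (X i) μ t
          ≤ Real.exp (-t * z) * Real.exp (t * M + t ^ 2 * V / 8) :=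
            mul_le_mul_of_nonneg_left hmgfbd (Real.exp_pos _).le
        _ = Real.exp (-t * ε + t ^ 2 * V / 8) := by
            rw [← Real.exp_add]; congr 1; rw [hεdef]; ring
        _ = Real.exp (-(2 * ε ^ 2 / V)) := by
            congr 1
            rw [htdef]
            field_simp
            ring
        _ ≤ Real.exp (Real.log (1 - q)) := by
            apply Real.exp_le_exp.2
            have h2 : 2 * κ ≤ 2 * ε ^ 2 / V := by
              rw [le_div_iff₀ hVpos]
              nlinarith
            have : Real.log (1 - q) = -(2 * κ) := by rw [hκdef]; ring
            rw [this]
            linarith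
        _ = 1 - q := Real.exp_log hq1
    have htail : (μ {ω | z ≤ (∑ i, X i) ω}).toReal ≤ 1 - q := key.trans hexp
    have hsub : {ω | ∑ i, X i ω ≤ z}ᶜ ⊆ {ω | z ≤ (∑ i, X i) ω} := by
      intro ω hω
      simp only [Set.mem_compl_iff, Set.mem_setOf_eq, not_le] at hω ⊢
      rw [Finset.sum_apply]
      exact hω.le
    have hcompl : (μ {ω | ∑ i, X i ω ≤ z}ᶜ).toReal ≤ 1 - q :=
      le_trans (ENNReal.toReal_mono (measure_ne_top _ _) (measure_mono hsub)) htail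
    have hsum1 : (μ {ω | ∑ i, X i ω ≤ z}).toReal
        + (μ {ω | ∑ i, X i ω ≤ z}ᶜ).toReal = 1 := by
      rw [← ENNReal.toReal_add (measure_ne_top _ _) (measure_ne_top _ _),
        prob_add_prob_compl hEmeas, ENNReal.toReal_one]
    linarith

lemma l2_le_l1 {ι : Type*} [Fintype ι] (x : ι → ℝ) (hx : ∀ i, 0 ≤ x i) :
    Real.sqrt (∑ i, x i ^ 2) ≤ ∑ i, x i := by
  have hs : 0 ≤ ∑ i, x i := Finset.sum_nonneg fun i _ => hx i
  rw [show ∑ i, x i = Real.sqrt ((∑ i, x i) ^ 2) from (Real.sqrt_sq hs).symm]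
  apply Real.sqrt_le_sqrt
  calc ∑ i, x i ^ 2 ≤ ∑ i, x i * ∑ j, x j := by
        refine Finset.sum_le_sum fun i _ => ?_
        rw [pow_two]
        exact mul_le_mul_of_nonneg_left
          (Finset.single_le_sum (fun j _ => hx j) (Finset.mem_univ i)) (hx i)
    _ = (∑ i, x i) ^ 2 := by rw [← Finset.sum_mul, pow_two]


/-- Hoeffding-based convex upper bound approximation for the JCCMDP problem under
random running costs (Theorem 5, part 2). -/
theorem jccmdp_hoeffding_upper_bound
    {Ω : Type*} [MeasurableSpace Ω] (P : Measure Ω) [IsProbabilityMeasure P]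
    {S K : Type*} [Fintype S] [Fintype K] [DecidableEq S]
    (st : K → S) (Pr : K → S → ℝ) (α : ℝ) (hα : α ∈ Set.Ioo (0 : ℝ) 1)
    (γ : S → ℝ)
    {NK : ℕ} (c : Ω → K → ℝ) (d : Fin NK → Ω → K → ℝ)
    (hcmeas : ∀ j, Measurable (fun ω => c ω j))
    (hdmeas : ∀ k j, Measurable (fun ω => d k ω j))
    (hcindep : iIndepFun (fun j ω => c ω j) P)
    (hdindep : ∀ k, iIndepFun (fun j ω => d k ω j) P)
    (μc : K → ℝ) (μd : Fin NK → K → ℝ)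
    (hμc : ∀ j, ∫ ω, c ω j ∂P = μc j)
    (hμd : ∀ k j, ∫ ω, d k ω j ∂P = μd k j)
    (cl cu : K → ℝ) (dl du : Fin NK → K → ℝ)
    (hcbdd : ∀ j, ∀ᵐ ω ∂P, c ω j ∈ Set.Icc (cl j) (cu j))
    (hdbdd : ∀ k j, ∀ᵐ ω ∂P, d k ω j ∈ Set.Icc (dl k j) (du k j))
    (Vstar : Fin NK → ℝ)
    (hV : ∀ k, ∀ ρ' ∈ Qset st Pr α γ, ∑ j, ρ' j * (du k j - dl k j) ≤ Vstar k)
    (p0 p1 θ : ℝ) (hp0 : p0 ∈ Set.Ioo (0 : ℝ) 1)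
    (hp1 : 1 - Real.exp (-(1/2)) ≤ p1) (hp1' : p1 < 1)
    (hθ : 1 ≤ θ) (ξ : Fin NK → ℝ)
    (z : ℝ) (ρ : K → ℝ) (hρ : ρ ∈ Qset st Pr α γ)
    (y : Fin NK → ℝ) (hy : ∀ k, y k ∈ Set.Ioc (0 : ℝ) 1) (hysum : ∑ k, y k = 1)
    (hobj : ∑ j, ρ j * μc j +
      Real.sqrt (-(1/2) * Real.log (1 - p0)) *
        Real.sqrt (∑ j, (ρ j) ^ 2 * (cu j - cl j) ^ 2) ≤ z)
    (hconstr : ∀ k, ∑ j, ρ j * μd k j +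
      Real.sqrt (-(1/2) * Real.log (1 - p1 ^ (y k ^ (1 / θ)))) * Vstar k ≤ ξ k) :
    p0 ≤ (P {ω | ∑ j, ρ j * c ω j ≤ z}).toReal ∧
    ∀ k, p1 ^ (y k ^ (1 / θ)) ≤ (P {ω | ∑ j, ρ j * d k ω j ≤ ξ k}).toReal := by
  have hρ0 := hρ.1
  constructor
  · -- first chance constraint
    have h1 := hoeffding_prob (μ := P) (X := fun j ω => ρ j * c ω j)
      (a := fun j => ρ j * cl j) (b := fun j => ρ j * cu j)
      (fun j => (hcmeas j).const_mul (ρ j))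
      (hcindep.comp (fun j x => ρ j * x) (fun j => measurable_const.mul measurable_id))
      (fun j => by
        filter_upwards [hcbdd j] with ω h
        exact ⟨mul_le_mul_of_nonneg_left h.1 (hρ0 j),
          mul_le_mul_of_nonneg_left h.2 (hρ0 j)⟩)
      (q := p0) (z := z) hp0 ?_
    · exact h1
    · have e1 : ∀ j : K, ∫ ω, ρ j * c ω j ∂P = ρ j * μc j := fun j => by
        rw [integral_const_mul, hμc j]
      have e2 : ∀ j : K, (ρ j * cu j - ρ j * cl j) ^ 2 = ρ j ^ 2 * (cu j - cl j) ^ 2 :=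
        fun j => by ring
      calc (∑ j, ∫ ω, ρ j * c ω j ∂P) + Real.sqrt (-(1/2) * Real.log (1 - p0)) *
            Real.sqrt (∑ j, (ρ j * cu j - ρ j * cl j) ^ 2)
          = ∑ j, ρ j * μc j + Real.sqrt (-(1/2) * Real.log (1 - p0)) *
            Real.sqrt (∑ j, ρ j ^ 2 * (cu j - cl j) ^ 2) := by
            rw [Finset.sum_congr rfl fun j _ => e1 j,
              Finset.sum_congr rfl fun j _ => e2 j]
        _ ≤ z := hobj
  · -- second family of chance constraints
    intro k
    have hexphalf : Real.exp (-(1/2 : ℝ)) < 1 := by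
      rw [show (1:ℝ) = Real.exp 0 from (Real.exp_zero).symm]
      exact Real.exp_lt_exp.2 (by norm_num)
    have hp1pos : 0 < p1 := by linarith
    have he : 0 < y k ^ (1 / θ) := Real.rpow_pos_of_pos (hy k).1 _
    have hqk : p1 ^ (y k ^ (1 / θ)) ∈ Set.Ioo (0:ℝ) 1 :=
      ⟨Real.rpow_pos_of_pos hp1pos _, Real.rpow_lt_one hp1pos.le hp1' he⟩
    have hdlu : ∀ j : K, dl k j ≤ du k j := fun j => by
      have hne : (ae P).NeBot := ae_neBot.2 (IsProbabilityMeasure.ne_zero P)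
      obtain ⟨ω, hω⟩ := (hdbdd k j).exists
      exact hω.1.trans hω.2
    have hsq : Real.sqrt (∑ j, (ρ j * du k j - ρ j * dl k j) ^ 2)
        ≤ Vstar k := by
      have h0 : ∀ j : K, 0 ≤ ρ j * (du k j - dl k j) :=
        fun j => mul_nonneg (hρ0 j) (by linarith [hdlu j])
      have e3 : ∀ j : K, (ρ j * du k j - ρ j * dl k j) ^ 2
          = (ρ j * (du k j - dl k j)) ^ 2 := fun j => by ring
      rw [Finset.sum_congr rfl fun j _ => e3 j]
      exact (l2_le_l1 _ h0).trans (hV k ρ hρ)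
    have h1 := hoeffding_prob (μ := P) (X := fun j ω => ρ j * d k ω j)
      (a := fun j => ρ j * dl k j) (b := fun j => ρ j * du k j)
      (fun j => (hdmeas k j).const_mul (ρ j))
      ((hdindep k).comp (fun j x => ρ j * x) (fun j => measurable_const.mul measurable_id))
      (fun j => by
        filter_upwards [hdbdd k j] with ω h
        exact ⟨mul_le_mul_of_nonneg_left h.1 (hρ0 j),
          mul_le_mul_of_nonneg_left h.2 (hρ0 j)⟩)
      (q := p1 ^ (y k ^ (1 / θ))) (z := ξ k) hqk ?_
    · exact h1
    · have e1 : ∀ j : K, ∫ ω, ρ j * d k ω j ∂P = ρ j * μd k j := fun j => by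
        rw [integral_const_mul, hμd k j]
      have hκ0 : 0 ≤ Real.sqrt (-(1/2) * Real.log (1 - p1 ^ (y k ^ (1 / θ)))) :=
        Real.sqrt_nonneg _
      calc (∑ j, ∫ ω, ρ j * d k ω j ∂P)
            + Real.sqrt (-(1/2) * Real.log (1 - p1 ^ (y k ^ (1 / θ)))) *
              Real.sqrt (∑ j, (ρ j * du k j - ρ j * dl k j) ^ 2)
          ≤ ∑ j, ρ j * μd k j
            + Real.sqrt (-(1/2) * Real.log (1 - p1 ^ (y k ^ (1 / θ)))) * Vstar k := by
            rw [Finset.sum_congr rfl fun j _ => e1 j]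
            exact add_le_add le_rfl (mul_le_mul_of_nonneg_left hsq hκ0)
        _ ≤ ξ k := hconstr k
end

section
/- Consider the JCCMDP setting under random running costs. Suppose the components of c̃ are independent with mean vector μ_c and almost-sure bounds c̃^l(s,a) ≤ c̃(s,a) ≤ c̃^u(s,a) with c̃^l(s,a) < c̃^u(s,a), and for each k the components of d̃^k are independent with mean vector μ_{d^k} and almost-sure bounds d̃^{kl}(s,a) ≤ d̃^k(s,a) ≤ d̃^{ku}(s,a) with d̃^{kl}(s,a) < d̃^{ku}(s,a). Fix constants h₀ > 0 and h_k > 0, and set A_c(s,a) = (μ_c(s,a) − c̃^l(s,a))/(c̃^u(s,a) − c̃^l(s,a)) and A_{d^k}(s,a) = (μ_{d^k}(s,a) − d̃^{kl}(s,a))/(d̃^{ku}(s,a) − d̃^{kl}(s,a)). Let p₀, p₁ ∈ (0,1), θ ≥ 1. If z ∈ ℝ, ρ ∈ Q^α(γ), and (y_k)_{k=1}^K with y_k ∈ (0,1] and Σ_k y_k = 1 satisfy Σ_{(s,a)} ln{ A_c(s,a)·exp(h₀ ρ(s,a) c̃^u(s,a)) + (1 − A_c(s,a))·exp(h₀ ρ(s,a)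 c̃^l(s,a)) } ≤ ln(1−p₀) + h₀ z, and for each k, Σ_{(s,a)} ln{ A_{d^k}(s,a)·exp(h_k ρ(s,a) d̃^{ku}(s,a)) + (1 − A_{d^k}(s,a))·exp(h_k ρ(s,a) d̃^{kl}(s,a)) } ≤ ln(1 − p₁^{y_k^{1/θ}}) + h_k ξ_k, then ℙ(Σ_{(s,a)} ρ(s,a) c̃(s,a) ≤ z) ≥ p₀ and ℙ(Σ_{(s,a)} ρ(s,a) d̃^k(s,a) ≤ ξ_k) ≥ p₁^{y_k^{1/θ}} for every k. -/
open MeasureTheory ProbabilityTheory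

/-- Pointwise convexity bound: for `x ∈ [l,u]`, `exp (t*x)` is below the chord. -/
lemma exp_le_chord {l u t x : ℝ} (hlu : l < u) (hx : x ∈ Set.Icc l u) :
    Real.exp (t * x) ≤ (u - x) / (u - l) * Real.exp (t * l)
      + (x - l) / (u - l) * Real.exp (t * u) := by
  have hul : (0 : ℝ) < u - l := by linarith
  have ha : 0 ≤ (u - x) / (u - l) := by
    apply div_nonneg _ hul.le; linarith [hx.2]
  have hb : 0 ≤ (x - l) / (u - l) := by
    apply div_nonneg _ hul.le; linarith [hx.1]
  have hab : (u - x) / (u - l) + (x - l) / (u - l) = 1 := by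
    field_simp; ring
  have hcomb : (u - x) / (u - l) * (t * l) + (x - l) / (u - l) * (t * u) = t * x := by
    field_simp; ring
  have := convexOn_exp.2 (Set.mem_univ (t * l)) (Set.mem_univ (t * u)) ha hb hab
  simpa [smul_eq_mul, hcomb] using this

/-- One-sided Chernoff/Hoeffding-style bound with independent bounded summands. -/
lemma chernoff_onesided {Ω K : Type*} [MeasurableSpace Ω] [Fintype K]
    (P : Measure Ω) [IsProbabilityMeasure P]
    (X : Ω → K → ℝ) (hmeas : ∀ j, Measurable fun ω => X ω j)
    (hindep : iIndepFun (fun j ω => X ω j) P)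
    (μv l u : K → ℝ) (hμ : ∀ j, ∫ ω, X ω j ∂P = μv j)
    (hlu : ∀ j, l j < u j) (hbdd : ∀ j, ∀ᵐ ω ∂P, X ω j ∈ Set.Icc (l j) (u j))
    (h : ℝ) (hh : 0 < h) (ρ : K → ℝ) (hρ : ∀ j, 0 ≤ ρ j)
    (q z : ℝ) (hq0 : 0 < q) (hq1 : q < 1)
    (hobj : ∑ j, Real.log ((μv j - l j) / (u j - l j) * Real.exp (h * ρ j * u j)
        + (1 - (μv j - l j) / (u j - l j)) * Real.exp (h * ρ j * l j))
      ≤ Real.log (1 - q) + h * z) :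
    q ≤ (P {ω | ∑ j, ρ j * X ω j ≤ z}).toReal := by
  classical
  set Y : K → Ω → ℝ := fun j ω => ρ j * X ω j with hY
  have hYmeas : ∀ j, Measurable (Y j) := fun j => (hmeas j).const_mul (ρ j)
  have hYindep : iIndepFun Y P :=
    hindep.comp (fun j x => ρ j * x) (fun j => measurable_const_mul _)
  -- integrability of each X j
  have hXint : ∀ j, Integrable (fun ω => X ω j) P := by
    intro j
    refine Integrable.mono' (integrable_const (|l j| + |u j|))
      (hmeas j).aestronglyMeasurable ?_
    filter_upwards [hbdd j] with ω hω
    rcases hω with ⟨h1, h2⟩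
    rw [Real.norm_eq_abs, abs_le]
    constructor
    · calc -(|l j| + |u j|) ≤ -|l j| := by
            have := abs_nonneg (u j); linarith
        _ ≤ l j := neg_abs_le _
        _ ≤ X ω j := h1
    · calc X ω j ≤ u j := h2
        _ ≤ |u j| := le_abs_self _
        _ ≤ |l j| + |u j| := by have := abs_nonneg (l j); linarith
  have hlμ : ∀ j, l j ≤ μv j := by
    intro j
    rw [← hμ j]
    have : ∫ _ : Ω, l j ∂P ≤ ∫ ω, X ω j ∂P := by
      refine integral_mono_ae (integrable_const _) (hXint j) ?_
      filter_upwards [hbdd j] with ω hω using hω.1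
    simpa using this
  have hμu : ∀ j, μv j ≤ u j := by
    intro j
    rw [← hμ j]
    have : ∫ ω, X ω j ∂P ≤ ∫ _ : Ω, u j ∂P := by
      refine integral_mono_ae (hXint j) (integrable_const _) ?_
      filter_upwards [hbdd j] with ω hω using hω.2
    simpa using this
  -- the bounding constant for each coordinate
  set M : K → ℝ := fun j => (μv j - l j) / (u j - l j) * Real.exp (h * ρ j * u j)
      + (1 - (μv j - l j) / (u j - l j)) * Real.exp (h * ρ j * l j) with hM
  -- integrability of exp(h * Y j)
  have hYexp_int : ∀ j, Integrable (fun ω => Real.exp (h * Y j ω)) P := by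
    intro j
    refine Integrable.mono' (integrable_const (Real.exp (h * (ρ j * u j))))
      (((hYmeas j).const_mul h).exp).aestronglyMeasurable ?_
    filter_upwards [hbdd j] with ω hω
    rw [Real.norm_eq_abs, Real.abs_exp, Real.exp_le_exp]
    have h3 : ρ j * X ω j ≤ ρ j * u j := mul_le_mul_of_nonneg_left hω.2 (hρ j)
    exact mul_le_mul_of_nonneg_left h3 hh.le
  -- mgf bound for each coordinate
  have hmgf_le : ∀ j, mgf (Y j) P h ≤ M j := by
    intro j
    have hul : (0 : ℝ) < u j - l j := by linarith [hlu j]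
    set B : ℝ := (Real.exp (h * ρ j * u j) - Real.exp (h * ρ j * l j)) / (u j - l j)
      with hB
    set C : ℝ := (u j * Real.exp (h * ρ j * l j) - l j * Real.exp (h * ρ j * u j))
      / (u j - l j) with hC
    have key : ∀ᵐ ω ∂P, Real.exp (h * Y j ω) ≤ B * X ω j + C := by
      filter_upwards [hbdd j] with ω hω
      have h1 := exp_le_chord (t := h * ρ j) (hlu j) hω
      have h2 : (u j - X ω j) / (u j - l j) * Real.exp (h * ρ j * l j)
          + (X ω j - l j) / (u j - l j) * Real.exp (h * ρ j * u j)
          = B * X ω j + C := by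
        rw [hB, hC]; field_simp; ring
      calc Real.exp (h * Y j ω) = Real.exp (h * ρ j * X ω j) := by
            rw [hY]; ring_nf
        _ ≤ _ := h1
        _ = B * X ω j + C := h2
    have hRHSint : Integrable (fun ω => B * X ω j + C) P :=
      ((hXint j).const_mul B).add (integrable_const C)
    have hint_le : ∫ ω, Real.exp (h * Y j ω) ∂P ≤ ∫ ω, B * X ω j + C ∂P :=
      integral_mono_ae (hYexp_int j) hRHSint key
    have hRHSval : ∫ ω, B * X ω j + C ∂P = B * μv j + C := by
      rw [integral_add ((hXint j).const_mul B) (integrable_const C),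
        integral_const_mul, hμ j]
      simp
    have hBC : B * μv j + C = M j := by
      rw [hM, hB, hC]; field_simp; ring
    calc mgf (Y j) P h = ∫ ω, Real.exp (h * Y j ω) ∂P := rfl
      _ ≤ B * μv j + C := by rw [← hRHSval]; exact hint_le
      _ = M j := hBC
  have hMpos : ∀ j, 0 < M j :=
    fun j => lt_of_lt_of_le (mgf_pos (hYexp_int j)) (hmgf_le j)
  -- integrability of exp(h * ∑ Y j)
  have hsum_meas : Measurable (fun ω => ∑ j, Y j ω) :=
    Finset.measurable_sum _ (fun j _ => hYmeas j)
  have hsum_int : Integrable (fun ω => Real.exp (h * ∑ j, Y j ω)) P := by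
    refine Integrable.mono' (integrable_const (Real.exp (h * ∑ j, ρ j * u j)))
      ((hsum_meas.const_mul h).exp).aestronglyMeasurable ?_
    have hae : ∀ᵐ ω ∂P, ∀ j, X ω j ∈ Set.Icc (l j) (u j) :=
      (ae_all_iff).2 hbdd
    filter_upwards [hae] with ω hω
    rw [Real.norm_eq_abs, Real.abs_exp, Real.exp_le_exp]
    apply mul_le_mul_of_nonneg_left _ hh.le
    apply Finset.sum_le_sum
    intro j _
    exact mul_le_mul_of_nonneg_left (hω j).2 (hρ j)
  -- Chernoff bound
  have hchernoff : (P {ω | z ≤ ∑ j, Y j ω}).toReal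
      ≤ Real.exp (-h * z) * mgf (fun ω => ∑ j, Y j ω) P h :=
    measure_ge_le_exp_mul_mgf z hh.le hsum_int
  have hfuneq : (fun ω => ∑ j, Y j ω) = ∑ j, Y j := by
    funext ω; simp [Finset.sum_apply]
  have hmgf_sum : mgf (fun ω => ∑ j, Y j ω) P h = ∏ j, mgf (Y j) P h := by
    rw [hfuneq]
    exact hYindep.mgf_sum hYmeas Finset.univ
  have hprod_le : ∏ j, mgf (Y j) P h ≤ ∏ j, M j :=
    Finset.prod_le_prod (fun j _ => mgf_nonneg) (fun j _ => hmgf_le j)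
  have hprod_eq : ∏ j, M j = Real.exp (∑ j, Real.log (M j)) := by
    rw [Real.exp_sum]
    exact (Finset.prod_congr rfl (fun j _ => (Real.exp_log (hMpos j)).symm))
  have hfinal : (P {ω | z ≤ ∑ j, Y j ω}).toReal ≤ 1 - q := by
    have h1 : Real.exp (-h * z) * mgf (fun ω => ∑ j, Y j ω) P h
        ≤ Real.exp (-h * z) * Real.exp (∑ j, Real.log (M j)) := by
      apply mul_le_mul_of_nonneg_left _ (Real.exp_pos _).le
      rw [hmgf_sum, ← hprod_eq]
      exact hprod_le
    have h2 : Real.exp (-h * z) * Real.exp (∑ j, Real.log (M j)) ≤ 1 - q := by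
      rw [← Real.exp_add]
      have : -h * z + ∑ j, Real.log (M j) ≤ Real.log (1 - q) := by
        have := hobj
        simp only [hM]
        linarith
      calc Real.exp (-h * z + ∑ j, Real.log (M j))
          ≤ Real.exp (Real.log (1 - q)) := Real.exp_le_exp.2 this
        _ = 1 - q := Real.exp_log (by linarith)
    linarith [hchernoff]
  -- pass to the complement
  have hAmeas : MeasurableSet {ω | ∑ j, Y j ω ≤ z} :=
    measurableSet_le hsum_meas measurable_const
  have hcompl : (P {ω | ∑ j, Y j ω ≤ z}ᶜ).toReal
      = 1 - (P {ω | ∑ j, Y j ω ≤ z}).toReal := by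
    rw [prob_compl_eq_one_sub hAmeas]
    rw [ENNReal.toReal_sub_of_le prob_le_one (by simp)]
    simp
  have hsubset : {ω | ∑ j, Y j ω ≤ z}ᶜ ⊆ {ω | z ≤ ∑ j, Y j ω} := by
    intro ω hω
    simp only [Set.mem_compl_iff, Set.mem_setOf_eq, not_le] at hω
    exact le_of_lt hω
  have hmono : (P {ω | ∑ j, Y j ω ≤ z}ᶜ).toReal ≤ (P {ω | z ≤ ∑ j, Y j ω}).toReal :=
    ENNReal.toReal_mono (measure_ne_top _ _) (measure_mono hsubset)
  have : 1 - (P {ω | ∑ j, Y j ω ≤ z}).toReal ≤ 1 - q := by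
    rw [← hcompl]; linarith [hfinal, hmono]
  have hgoal : q ≤ (P {ω | ∑ j, Y j ω ≤ z}).toReal := by linarith
  exact hgoal

/-- Bernstein-based convex upper bound approximation for the JCCMDP problem under
random running costs (Theorem 6). -/
theorem jccmdp_bernstein_upper_bound
    {Ω : Type*} [MeasurableSpace Ω] (P : Measure Ω) [IsProbabilityMeasure P]
    {S K : Type*} [Fintype S] [Fintype K] [DecidableEq S]
    (st : K → S) (Pr : K → S → ℝ) (α : ℝ) (hα : α ∈ Set.Ioo (0 : ℝ) 1)
    (γ : S → ℝ)
    {NK : ℕ} (c : Ω → K → ℝ) (d : Fin NK → Ω → K → ℝ)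
    (hcmeas : ∀ j, Measurable (fun ω => c ω j))
    (hdmeas : ∀ k j, Measurable (fun ω => d k ω j))
    (hcindep : iIndepFun (fun j ω => c ω j) P)
    (hdindep : ∀ k, iIndepFun (fun j ω => d k ω j) P)
    (μc : K → ℝ) (μd : Fin NK → K → ℝ)
    (hμc : ∀ j, ∫ ω, c ω j ∂P = μc j)
    (hμd : ∀ k j, ∫ ω, d k ω j ∂P = μd k j)
    (cl cu : K → ℝ) (dl du : Fin NK → K → ℝ)
    (hclu : ∀ j, cl j < cu j) (hdlu : ∀ k j, dl k j < du k j)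
    (hcbdd : ∀ j, ∀ᵐ ω ∂P, c ω j ∈ Set.Icc (cl j) (cu j))
    (hdbdd : ∀ k j, ∀ᵐ ω ∂P, d k ω j ∈ Set.Icc (dl k j) (du k j))
    (h0 : ℝ) (hk : Fin NK → ℝ) (hh0 : 0 < h0) (hhk : ∀ k, 0 < hk k)
    (Ac : K → ℝ) (hAc : ∀ j, Ac j = (μc j - cl j) / (cu j - cl j))
    (Ad : Fin NK → K → ℝ)
    (hAd : ∀ k j, Ad k j = (μd k j - dl k j) / (du k j - dl k j))
    (p0 p1 θ : ℝ) (hp0 : p0 ∈ Set.Ioo (0 : ℝ) 1) (hp1 : p1 ∈ Set.Ioo (0 : ℝ) 1)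
    (hθ : 1 ≤ θ) (ξ : Fin NK → ℝ)
    (z : ℝ) (ρ : K → ℝ) (hρ : ρ ∈ Qset st Pr α γ)
    (y : Fin NK → ℝ) (hy : ∀ k, y k ∈ Set.Ioc (0 : ℝ) 1) (hysum : ∑ k, y k = 1)
    (hobj : ∑ j, Real.log
        (Ac j * Real.exp (h0 * ρ j * cu j) + (1 - Ac j) * Real.exp (h0 * ρ j * cl j))
      ≤ Real.log (1 - p0) + h0 * z)
    (hconstr : ∀ k, ∑ j, Real.log
        (Ad k j * Real.exp (hk k * ρ j * du k j) +
          (1 - Ad k j) * Real.exp (hk k * ρ j * dl k j))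
      ≤ Real.log (1 - p1 ^ (y k ^ (1 / θ))) + hk k * ξ k) :
    p0 ≤ (P {ω | ∑ j, ρ j * c ω j ≤ z}).toReal ∧
    ∀ k, p1 ^ (y k ^ (1 / θ)) ≤ (P {ω | ∑ j, ρ j * d k ω j ≤ ξ k}).toReal := by
  have hρnn : ∀ j, 0 ≤ ρ j := hρ.1
  constructor
  · refine chernoff_onesided P c hcmeas hcindep μc cl cu hμc hclu hcbdd h0 hh0
      ρ hρnn p0 z hp0.1 hp0.2 ?_
    simpa only [hAc] using hobj
  · intro k
    have he : 0 < y k ^ (1 / θ) := Real.rpow_pos_of_pos (hy k).1 _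
    have hq0 : 0 < p1 ^ (y k ^ (1 / θ)) := Real.rpow_pos_of_pos hp1.1 _
    have hq1 : p1 ^ (y k ^ (1 / θ)) < 1 := Real.rpow_lt_one hp1.1.le hp1.2 he
    refine chernoff_onesided P (d k) (hdmeas k) (hdindep k) (μd k) (dl k) (du k)
      (hμd k) (hdlu k) (hdbdd k) (hk k) (hhk k) ρ hρnn _ (ξ k) hq0 hq1 ?_
    simpa only [hAd] using hconstr k
end

section
/- Consider the JCCMDP setting under random running costs, with known mean vectors μ_c, μ_{d^k} and known almost-sure componentwise bounds c̃^l ≤ c̃ ≤ c̃^u and d̃^{kl} ≤ d̃^k ≤ d̃^{ku}. Let p₀, p₁ ∈ (0,1), θ ≥ 1, and fix constants λ_c > 0, λ_d > 0 and, for each k, tangent points y_k^1 < … < y_k^N in (0,1]; define a_k^i = p₁^{(y_k^i)^{1/θ}}·(1 − ((y_k^i)^{1/θ}/θ)·ln p₁) and b_k^i = p₁^{(y_k^i)^{1/θ}}·((y_k^i)^{(1/θ)−1}/θ)·ln p₁. Suppose z ∈ ℝ, ρ ∈ Q^α(γ), and (y_k)_{k=1}^K with y_k ≥ 0 and Σ_k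 y_k = 1 satisfy ℙ(ρᵀc̃ ≤ z) ≥ p₀ and ℙ(ρᵀd̃^k ≤ ξ_k) ≥ p₁^{y_k^{1/θ}} for all k. Then there exist reals 𝔪_c, 𝔪_d and (ȳ_k)_{k=1}^K such that: ρᵀμ_c − z ≤ (1−p₀)𝔪_c, λ_c ≤ 𝔪_c, ρᵀc̃^u − z ≤ 𝔪_c, ρᵀc̃^l ≤ z; for all i and k, ρᵀμ_{d^k} − ξ_k + a_k^i 𝔪_d + b_k^i ȳ_k ≤ 𝔪_d; λ_d ≤ 𝔪_d, ρᵀd̃^{ku} − ξ_k ≤ 𝔪_d, ρᵀd̃^{kl} ≤ ξ_k for all k; and Σ_k ȳ_k = 𝔪_d with ȳ_k ≥ 0 for all k. -/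
open MeasureTheory ProbabilityTheory

/-- Every feasible point of the joint chance-constrained MDP problem yields a
feasible point of the lower-bound LP (Theorem 7 of the paper). -/
theorem jccmdp_lower_bound_LP_feasibility
    {Ω : Type*} [MeasurableSpace Ω] (P : Measure Ω) [IsProbabilityMeasure P]
    {S K : Type*} [Fintype S] [Fintype K] [DecidableEq S]
    (st : K → S) (Pr : K → S → ℝ) (α : ℝ) (hα : α ∈ Set.Ioo (0 : ℝ) 1)
    (γ : S → ℝ)
    {NK : ℕ} (c : Ω → K → ℝ) (d : Fin NK → Ω → K → ℝ)
    (μc : K → ℝ) (μd : Fin NK → K → ℝ)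
    (hcint : ∀ j, Integrable (fun ω => c ω j) P)
    (hdint : ∀ k j, Integrable (fun ω => d k ω j) P)
    (hμc : ∀ j, ∫ ω, c ω j ∂P = μc j)
    (hμd : ∀ k j, ∫ ω, d k ω j ∂P = μd k j)
    (cl cu : K → ℝ) (dl du : Fin NK → K → ℝ)
    (hcbdd : ∀ j, ∀ᵐ ω ∂P, c ω j ∈ Set.Icc (cl j) (cu j))
    (hdbdd : ∀ k j, ∀ᵐ ω ∂P, d k ω j ∈ Set.Icc (dl k j) (du k j))
    (p0 p1 θ : ℝ) (hp0 : p0 ∈ Set.Ioo (0 : ℝ) 1) (hp1 : p1 ∈ Set.Ioo (0 : ℝ) 1)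
    (hθ : 1 ≤ θ) (ξ : Fin NK → ℝ)
    (lamc lamd : ℝ) (hlamc : 0 < lamc) (hlamd : 0 < lamd)
    (N : ℕ) (yp : Fin NK → Fin N → ℝ)
    (hyp : ∀ k i, yp k i ∈ Set.Ioc (0 : ℝ) 1)
    (hypmono : ∀ k, StrictMono (yp k))
    (a b : Fin NK → Fin N → ℝ)
    (ha : ∀ k i, a k i =
      p1 ^ (yp k i ^ (1 / θ)) * (1 - yp k i ^ (1 / θ) / θ * Real.log p1))
    (hb : ∀ k i, b k i =
      p1 ^ (yp k i ^ (1 / θ)) * (yp k i ^ (1 / θ - 1) / θ) * Real.log p1)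
    (z : ℝ) (ρ : K → ℝ) (hρ : ρ ∈ Qset st Pr α γ)
    (y : Fin NK → ℝ) (hy : ∀ k, 0 ≤ y k) (hysum : ∑ k, y k = 1)
    (hcc0 : p0 ≤ (P {ω | ∑ j, ρ j * c ω j ≤ z}).toReal)
    (hcck : ∀ k, p1 ^ (y k ^ (1 / θ)) ≤ (P {ω | ∑ j, ρ j * d k ω j ≤ ξ k}).toReal) :
    ∃ (mc md : ℝ) (ybar : Fin NK → ℝ),
      (∑ j, ρ j * μc j - z ≤ (1 - p0) * mc) ∧
      lamc ≤ mc ∧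
      (∑ j, ρ j * cu j - z ≤ mc) ∧
      (∑ j, ρ j * cl j ≤ z) ∧
      (∀ i k, ∑ j, ρ j * μd k j - ξ k + a k i * md + b k i * ybar k ≤ md) ∧
      lamd ≤ md ∧
      (∀ k, ∑ j, ρ j * du k j - ξ k ≤ md) ∧
      (∀ k, ∑ j, ρ j * dl k j ≤ ξ k) ∧
      (∑ k, ybar k = md) ∧
      (∀ k, 0 ≤ ybar k) := by
  classical
  obtain ⟨hρpos, -⟩ := hρ
  -- NK ≠ 0 since ∑ y = 1
  rcases Nat.eq_zero_or_pos NK with h0 | hNKpos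
  · subst h0; simp at hysum
  have hNKR : (0:ℝ) < NK := by exact_mod_cast hNKpos
  have hlogp1 : Real.log p1 < 0 := Real.log_neg hp1.1 hp1.2
  have hθ0 : (0:ℝ) < θ := lt_of_lt_of_le one_pos hθ
  -- key lemma: positive-probability event plus a.s. lower bounds gives the bound
  have key : ∀ (f : Ω → K → ℝ) (fl : K → ℝ) (t q : ℝ), 0 < q →
      (∀ j, ∀ᵐ ω ∂P, fl j ≤ f ω j) →
      q ≤ (P {ω | ∑ j, ρ j * f ω j ≤ t}).toReal →
      ∑ j, ρ j * fl j ≤ t := by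
    intro f fl t q hq hbd hle
    set s := {ω | ∑ j, ρ j * f ω j ≤ t}
    have hPs : P s ≠ 0 := by
      intro h
      rw [h] at hle
      simp at hle
      linarith
    have hae : ∀ᵐ ω ∂P, ∀ j, fl j ≤ f ω j := ae_all_iff.2 hbd
    set t' := {ω | ∀ j, fl j ≤ f ω j}
    have hnull : P {ω | ¬ (∀ j, fl j ≤ f ω j)} = 0 := ae_iff.mp hae
    have hdiff : P (s \ t') = 0 :=
      measure_mono_null (fun ω hω => hω.2) hnull
    have hinter : P (s ∩ t') ≠ 0 := by
      intro h
      have := measure_le_inter_add_diff P s t'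
      rw [h, hdiff] at this
      simp at this
      exact hPs this
    obtain ⟨ω, hω⟩ := nonempty_of_measure_ne_zero hinter
    calc ∑ j, ρ j * fl j ≤ ∑ j, ρ j * f ω j := by
          apply Finset.sum_le_sum
          intro j _
          exact mul_le_mul_of_nonneg_left (hω.2 j) (hρpos j)
      _ ≤ t := hω.1
  -- a ≤ 1 and b < 0
  have ha_le : ∀ k i, a k i ≤ 1 := by
    intro k i
    rw [ha]
    set tt := yp k i ^ (1 / θ) with htt
    have httpos : 0 < tt := Real.rpow_pos_of_pos (hyp k i).1 _
    set u := -(tt / θ * Real.log p1) with hu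
    have hu0 : 0 ≤ u := by
      have : tt / θ * Real.log p1 ≤ 0 :=
        mul_nonpos_of_nonneg_of_nonpos (by positivity) hlogp1.le
      simp only [hu, neg_nonneg]; linarith
    have hpt : p1 ^ tt = Real.exp (tt * Real.log p1) := by
      rw [Real.rpow_def_of_pos hp1.1, mul_comm]
    have h2 : tt * Real.log p1 = -(θ * u) := by
      rw [hu]
      field_simp
    have h1 : 1 - tt / θ * Real.log p1 = 1 + u := by rw [hu]; ring
    rw [hpt, h1, h2]
    calc Real.exp (-(θ * u)) * (1 + u)
        ≤ Real.exp (-u) * Real.exp u := by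
          apply mul_le_mul
          · apply Real.exp_le_exp.2
            nlinarith
          · linarith [Real.add_one_le_exp u]
          · linarith
          · exact (Real.exp_pos _).le
      _ = 1 := by rw [← Real.exp_add]; simp
  have hb_neg : ∀ k i, b k i < 0 := by
    intro k i
    rw [hb]
    have h1 : 0 < p1 ^ (yp k i ^ (1 / θ)) := Real.rpow_pos_of_pos hp1.1 _
    have h2 : 0 < yp k i ^ (1 / θ - 1) := Real.rpow_pos_of_pos (hyp k i).1 _
    exact mul_neg_of_pos_of_neg (by positivity) hlogp1
  set cf : Fin NK → Fin N → ℝ := fun k i => 1 - a k i - b k i / (NK : ℝ) with hcfdef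
  have hcf_pos : ∀ k i, 0 < cf k i := by
    intro k i
    have h1 := ha_le k i
    have h2 : b k i / (NK : ℝ) < 0 := div_neg_of_neg_of_pos (hb_neg k i) hNKR
    simp only [hcfdef]
    linarith
  clear_value cf
  -- choose mc
  set mc := lamc + max 0 ((∑ j, ρ j * μc j - z) / (1 - p0)) + max 0 (∑ j, ρ j * cu j - z)
    with hmcdef
  -- choose md
  set A := ∑ k, max 0 (∑ j, ρ j * du k j - ξ k) with hAdef
  set B := ∑ k, ∑ i, max 0 ((∑ j, ρ j * μd k j - ξ k) / cf k i) with hBdef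
  have hA0 : 0 ≤ A := Finset.sum_nonneg fun _ _ => le_max_left 0 _
  have hB0 : 0 ≤ B := Finset.sum_nonneg fun _ _ =>
    Finset.sum_nonneg fun _ _ => le_max_left 0 _
  set md := lamd + A + B with hmddef
  have hmd_lam : lamd ≤ md := by simp only [hmddef]; linarith
  have hmd_pos : 0 < md := lt_of_lt_of_le hlamd hmd_lam
  clear_value mc A B md
  refine ⟨mc, md, fun _ => md / (NK : ℝ), ?_, ?_, ?_, ?_, ?_, ?_, ?_, ?_, ?_, ?_⟩
  · -- mean c constraint
    have h1 : (∑ j, ρ j * μc j - z) / (1 - p0) ≤ mc := by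
      have := le_max_right 0 ((∑ j, ρ j * μc j - z) / (1 - p0))
      have h2 := le_max_left 0 (∑ j, ρ j * cu j - z)
      simp only [hmcdef]; linarith
    have hp0' : 0 < 1 - p0 := by linarith [hp0.2]
    calc ∑ j, ρ j * μc j - z = ((∑ j, ρ j * μc j - z) / (1 - p0)) * (1 - p0) := by
          field_simp
      _ ≤ mc * (1 - p0) := mul_le_mul_of_nonneg_right h1 hp0'.le
      _ = (1 - p0) * mc := by ring
  · -- lamc ≤ mc
    have h1 := le_max_left 0 ((∑ j, ρ j * μc j - z) / (1 - p0))
    have h2 := le_max_left 0 (∑ j, ρ j * cu j - z)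
    simp only [hmcdef]; linarith
  · -- cu constraint
    have h1 := le_max_left 0 ((∑ j, ρ j * μc j - z) / (1 - p0))
    have h2 := le_max_right 0 (∑ j, ρ j * cu j - z)
    simp only [hmcdef]; linarith
  · -- cl ≤ z
    exact key c cl z p0 hp0.1
      (fun j => (hcbdd j).mono fun ω hω => hω.1) hcc0
  · -- tangent constraints
    intro i k
    have hth : (∑ j, ρ j * μd k j - ξ k) / cf k i ≤ md := by
      have h1 : max 0 ((∑ j, ρ j * μd k j - ξ k) / cf k i) ≤
          ∑ i', max 0 ((∑ j, ρ j * μd k j - ξ k) / cf k i') :=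
        Finset.single_le_sum (f := fun i' => max 0 ((∑ j, ρ j * μd k j - ξ k) / cf k i'))
          (fun _ _ => le_max_left 0 _) (Finset.mem_univ i)
      have h2 : (∑ i', max 0 ((∑ j, ρ j * μd k j - ξ k) / cf k i')) ≤ B := by
        rw [hBdef]
        exact Finset.single_le_sum
          (f := fun k' => ∑ i', max 0 ((∑ j, ρ j * μd k' j - ξ k') / cf k' i'))
          (fun _ _ => Finset.sum_nonneg fun _ _ => le_max_left 0 _) (Finset.mem_univ k)
      have h3 := le_max_right 0 ((∑ j, ρ j * μd k j - ξ k) / cf k i)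
      simp only [hmddef]; linarith
    have h4 : ∑ j, ρ j * μd k j - ξ k ≤ md * cf k i :=
      (div_le_iff₀ (hcf_pos k i)).mp hth
    have h5 : md * cf k i = md - a k i * md - b k i * (md / (NK : ℝ)) := by
      simp only [hcfdef]
      field_simp
    show ∑ j, ρ j * μd k j - ξ k + a k i * md + b k i * (md / (NK : ℝ)) ≤ md
    linarith
  · exact hmd_lam
  · -- du constraint
    intro k
    have h1 : max 0 (∑ j, ρ j * du k j - ξ k) ≤ A := by
      rw [hAdef]
      exact Finset.single_le_sum (f := fun k' => max 0 (∑ j, ρ j * du k' j - ξ k'))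
        (fun _ _ => le_max_left 0 _) (Finset.mem_univ k)
    have h2 := le_max_right 0 (∑ j, ρ j * du k j - ξ k)
    simp only [hmddef]; linarith
  · -- dl ≤ ξ
    intro k
    exact key (d k) (dl k) (ξ k) (p1 ^ (y k ^ (1 / θ)))
      (Real.rpow_pos_of_pos hp1.1 _)
      (fun j => (hdbdd k j).mono fun ω hω => hω.1) (hcck k)
  · -- sum ybar = md
    rw [Finset.sum_const, Finset.card_univ, Fintype.card_fin, nsmul_eq_mul]
    field_simp
  · intro k
    positivity
end

section
/- Let S be a finite nonempty set, α ∈ (0,1), γ ∈ ℝ^S a probability vector (γ ≥ 0 componentwise, Σ_s γ(s) = 1), and let P, M ∈ ℝ^{S×S} be row-stochastic matrices. Set Z = P − M, and let Z^l ∈ ℝ^{S×S} be a matrix with Z^l(s,s') ≤ Z(s,s') and Z^l(s,s') ≤ 0 for all s, s'. Let c, c^l, c^u ∈ ℝ^S satisfy c^l ≤ c ≤ c^u componentwise, and define the vectors C_max(s) = c^u(s) + (α/(1−α)) · max_{s'} c^u(s') and C_min(s) = c^l(s) + (α/(1−α)) · min_{s'} c^l(s'). Then γᵀ (I − αP)⁻¹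 c ≤ γᵀ (I − αM)⁻¹ ( c^u + α (Z − Z^l) C_max + α Z^l C_min ). -/
open Matrix

section Aux
variable {S : Type*} [Fintype S] [DecidableEq S] [Nonempty S]

lemma stoch_det_unit (α : ℝ) (hα : α ∈ Set.Ioo (0:ℝ) 1)
    (P : Matrix S S ℝ) (hP0 : ∀ s s', 0 ≤ P s s') (hP1 : ∀ s, ∑ s', P s s' = 1) :
    IsUnit (1 - α • P).det := by
  rw [isUnit_iff_ne_zero]
  intro hdet
  obtain ⟨v, hv, hveq⟩ := (Matrix.exists_mulVec_eq_zero_iff).mpr hdet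
  obtain ⟨s0, -, hs0⟩ := Finset.exists_max_image Finset.univ (fun s => |v s|)
    ⟨Classical.arbitrary S, Finset.mem_univ _⟩
  have h1 : v s0 = α * (P *ᵥ v) s0 := by
    have h := congrFun hveq s0
    simp only [Matrix.sub_mulVec, Matrix.one_mulVec, Matrix.smul_mulVec,
      Pi.sub_apply, Pi.smul_apply, smul_eq_mul, Pi.zero_apply] at h
    linarith
  have hle : |v s0| ≤ α * |v s0| := by
    calc |v s0| = α * |(P *ᵥ v) s0| := by rw [h1, abs_mul, abs_of_pos hα.1]
    _ ≤ α * |v s0| := by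
      apply mul_le_mul_of_nonneg_left _ hα.1.le
      calc |(P *ᵥ v) s0| ≤ ∑ s', |P s0 s' * v s'| := Finset.abs_sum_le_sum_abs _ _
      _ ≤ ∑ s', P s0 s' * |v s0| := by
          apply Finset.sum_le_sum; intro i _
          rw [abs_mul, abs_of_nonneg (hP0 _ _)]
          exact mul_le_mul_of_nonneg_left (hs0 i (Finset.mem_univ i)) (hP0 _ _)
      _ = |v s0| := by rw [← Finset.sum_mul, hP1, one_mul]
  have h0 : |v s0| = 0 := by nlinarith [abs_nonneg (v s0), hα.1, hα.2]
  apply hv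
  funext s
  have := hs0 s (Finset.mem_univ s)
  rw [h0] at this
  exact abs_nonpos_iff.mp this

lemma fixed_point (α : ℝ) (hα : α ∈ Set.Ioo (0:ℝ) 1)
    (P : Matrix S S ℝ) (hP0 : ∀ s s', 0 ≤ P s s') (hP1 : ∀ s, ∑ s', P s s' = 1)
    (b : S → ℝ) :
    (1 - α • P) *ᵥ ((1 - α • P)⁻¹ *ᵥ b) = b := by
  rw [Matrix.mulVec_mulVec, Matrix.mul_nonsing_inv _ (stoch_det_unit α hα P hP0 hP1),
    Matrix.one_mulVec]

lemma inv_nonneg_vec (α : ℝ) (hα : α ∈ Set.Ioo (0:ℝ) 1)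
    (M : Matrix S S ℝ) (hM0 : ∀ s s', 0 ≤ M s s') (hM1 : ∀ s, ∑ s', M s s' = 1)
    (b : S → ℝ) (hb : ∀ s, 0 ≤ b s) (s : S) :
    0 ≤ ((1 - α • M)⁻¹ *ᵥ b) s := by
  set y := (1 - α • M)⁻¹ *ᵥ b with hy
  have heq : ∀ t, y t = b t + α * (M *ᵥ y) t := by
    intro t
    have h := congrFun (fixed_point α hα M hM0 hM1 b) t
    simp only [Matrix.sub_mulVec, Matrix.one_mulVec, Matrix.smul_mulVec,
      Pi.sub_apply, Pi.smul_apply, smul_eq_mul, ← hy] at h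
    linarith
  obtain ⟨s0, -, hs0⟩ := Finset.exists_min_image Finset.univ (fun s => y s)
    ⟨Classical.arbitrary S, Finset.mem_univ _⟩
  have hMy : y s0 ≤ (M *ᵥ y) s0 := by
    calc y s0 = ∑ s', M s0 s' * y s0 := by rw [← Finset.sum_mul, hM1, one_mul]
    _ ≤ ∑ s', M s0 s' * y s' := by
        apply Finset.sum_le_sum; intro i _
        exact mul_le_mul_of_nonneg_left (hs0 i (Finset.mem_univ i)) (hM0 _ _)
    _ = (M *ᵥ y) s0 := rfl
  have h0 : 0 ≤ y s0 := by
    have := heq s0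
    nlinarith [hb s0, hα.1, hα.2]
  exact le_trans h0 (hs0 s (Finset.mem_univ s))

end Aux

/-- Deterministic upper bound on the discounted cost `γᵀ(I − αP)⁻¹c` in terms of the
mean transition matrix `M`, the perturbation `Z = P − M` and its nonpositive
componentwise lower bound `Z^l` (inequality (4.6) of the paper). -/
theorem discounted_cost_upper_bound
    {S : Type*} [Fintype S] [DecidableEq S] [Nonempty S]
    (α : ℝ) (hα : α ∈ Set.Ioo (0 : ℝ) 1)
    (γ : S → ℝ) (hγ0 : ∀ s, 0 ≤ γ s) (hγ1 : ∑ s, γ s = 1)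
    (P M : Matrix S S ℝ)
    (hP0 : ∀ s s', 0 ≤ P s s') (hP1 : ∀ s, ∑ s', P s s' = 1)
    (hM0 : ∀ s s', 0 ≤ M s s') (hM1 : ∀ s, ∑ s', M s s' = 1)
    (Zl : Matrix S S ℝ)
    (hZl : ∀ s s', Zl s s' ≤ (P - M) s s') (hZl0 : ∀ s s', Zl s s' ≤ 0)
    (c cl cu : S → ℝ) (hbd : ∀ s, cl s ≤ c s ∧ c s ≤ cu s)
    (Cmax Cmin : S → ℝ)
    (hCmax : ∀ s, Cmax s =
      cu s + α / (1 - α) * Finset.univ.sup' Finset.univ_nonempty cu)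
    (hCmin : ∀ s, Cmin s =
      cl s + α / (1 - α) * Finset.univ.inf' Finset.univ_nonempty cl) :
    γ ⬝ᵥ ((1 - α • P)⁻¹ *ᵥ c) ≤
      γ ⬝ᵥ ((1 - α • M)⁻¹ *ᵥ
        (cu + α • (((P - M) - Zl) *ᵥ Cmax) + α • (Zl *ᵥ Cmin))) := by
  obtain ⟨hα0, hα1⟩ := hα
  have h1α : (0:ℝ) < 1 - α := by linarith
  set x := (1 - α • P)⁻¹ *ᵥ c with hx
  -- fixed point equation for x
  have heqx : ∀ t, x t = c t + α * (P *ᵥ x) t := by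
    intro t
    have h := congrFun (fixed_point α ⟨hα0, hα1⟩ P hP0 hP1 c) t
    simp only [Matrix.sub_mulVec, Matrix.one_mulVec, Matrix.smul_mulVec,
      Pi.sub_apply, Pi.smul_apply, smul_eq_mul, ← hx] at h
    linarith
  -- upper bound on x
  set K := Finset.univ.sup' Finset.univ_nonempty cu with hK
  have hcuK : ∀ s, cu s ≤ K := fun s => Finset.le_sup' cu (Finset.mem_univ s)
  obtain ⟨smax, -, hsmax⟩ := Finset.exists_max_image Finset.univ (fun s => x s)
    ⟨Classical.arbitrary S, Finset.mem_univ _⟩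
  have hPxmax : ∀ t, (P *ᵥ x) t ≤ x smax := by
    intro t
    calc (P *ᵥ x) t = ∑ s', P t s' * x s' := rfl
    _ ≤ ∑ s', P t s' * x smax := by
        apply Finset.sum_le_sum; intro i _
        exact mul_le_mul_of_nonneg_left (hsmax i (Finset.mem_univ i)) (hP0 _ _)
    _ = x smax := by rw [← Finset.sum_mul, hP1, one_mul]
  have hxmax : x smax ≤ K / (1 - α) := by
    have h := heqx smax
    have h2 := hPxmax smax
    have h3 := (hbd smax).2
    have h4 := hcuK smax
    rw [le_div_iff₀ h1α]
    nlinarith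
  have hxCmax : ∀ s, x s ≤ Cmax s := by
    intro s
    rw [hCmax s]
    have h := heqx s
    have h2 := hPxmax s
    have : α * (P *ᵥ x) s ≤ α / (1 - α) * K := by
      calc α * (P *ᵥ x) s ≤ α * (K / (1 - α)) :=
        mul_le_mul_of_nonneg_left (le_trans h2 hxmax) hα0.le
      _ = α / (1 - α) * K := by ring
    have h3 := (hbd s).2
    linarith
  -- lower bound on x
  set k := Finset.univ.inf' Finset.univ_nonempty cl with hk
  have hclk : ∀ s, k ≤ cl s := fun s => Finset.inf'_le cl (Finset.mem_univ s)
  obtain ⟨smin, -, hsmin⟩ := Finset.exists_min_image Finset.univ (fun s => x s)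
    ⟨Classical.arbitrary S, Finset.mem_univ _⟩
  have hPxmin : ∀ t, x smin ≤ (P *ᵥ x) t := by
    intro t
    calc x smin = ∑ s', P t s' * x smin := by rw [← Finset.sum_mul, hP1, one_mul]
    _ ≤ ∑ s', P t s' * x s' := by
        apply Finset.sum_le_sum; intro i _
        exact mul_le_mul_of_nonneg_left (hsmin i (Finset.mem_univ i)) (hP0 _ _)
    _ = (P *ᵥ x) t := rfl
  have hxmin : k / (1 - α) ≤ x smin := by
    have h := heqx smin
    have h2 := hPxmin smin
    have h3 := (hbd smin).1
    have h4 := hclk smin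
    rw [div_le_iff₀ h1α]
    nlinarith
  have hxCmin : ∀ s, Cmin s ≤ x s := by
    intro s
    rw [hCmin s]
    have h := heqx s
    have h2 := hPxmin s
    have : α / (1 - α) * k ≤ α * (P *ᵥ x) s := by
      calc α / (1 - α) * k = α * (k / (1 - α)) := by ring
      _ ≤ α * (P *ᵥ x) s :=
        mul_le_mul_of_nonneg_left (le_trans hxmin h2) hα0.le
    have h3 := (hbd s).1
    linarith
  -- the RHS vector dominates (1 - α•M) *ᵥ x componentwise
  set b := cu + α • (((P - M) - Zl) *ᵥ Cmax) + α • (Zl *ᵥ Cmin) with hb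
  set d := b - (1 - α • M) *ᵥ x with hd
  have hd0 : ∀ s, 0 ≤ d s := by
    intro s
    have hAx : ((1 - α • M) *ᵥ x) s = c s + α * ((P - M) *ᵥ x) s := by
      simp only [Matrix.sub_mulVec, Matrix.one_mulVec, Matrix.smul_mulVec,
        Pi.sub_apply, Pi.smul_apply, smul_eq_mul]
      have := heqx s
      linarith
    have hds : d s = (cu s - c s)
        + α * ((((P - M) - Zl) *ᵥ (Cmax - x)) s)
        + α * ((Zl *ᵥ (Cmin - x)) s) := by
      simp only [hd, hb, Pi.sub_apply, Pi.add_apply, Pi.smul_apply, smul_eq_mul, hAx,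
        Matrix.mulVec_sub]
      have hsplit : ((P - M) *ᵥ x) s = (((P - M) - Zl) *ᵥ x) s + (Zl *ᵥ x) s := by
        simp [Matrix.sub_mulVec]
      rw [hsplit]
      ring
    rw [hds]
    have t1 : 0 ≤ cu s - c s := by linarith [(hbd s).2]
    have t2 : 0 ≤ ((((P - M) - Zl) *ᵥ (Cmax - x)) s) := by
      apply Finset.sum_nonneg; intro i _
      have h1 := hZl s i
      have h2 := hxCmax i
      simp only [Matrix.sub_apply] at h1 ⊢
      simp only [Pi.sub_apply]
      apply mul_nonneg <;> linarith
    have t3 : 0 ≤ ((Zl *ᵥ (Cmin - x)) s) := by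
      apply Finset.sum_nonneg; intro i _
      have h1 := hZl0 s i
      have h2 := hxCmin i
      have := mul_nonneg (neg_nonneg.mpr h1) (by simp only [Pi.sub_apply]; linarith :
        (0:ℝ) ≤ -((Cmin - x) i))
      nlinarith
    nlinarith [hα0]
  -- put it together
  have hbsplit : b = (1 - α • M) *ᵥ x + d := by
    funext t; simp only [hd, Pi.add_apply, Pi.sub_apply]; ring
  have hinv : (1 - α • M)⁻¹ *ᵥ ((1 - α • M) *ᵥ x) = x := by
    rw [Matrix.mulVec_mulVec, Matrix.nonsing_inv_mul _ (stoch_det_unit α ⟨hα0, hα1⟩ M hM0 hM1),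
      Matrix.one_mulVec]
  have : γ ⬝ᵥ ((1 - α • M)⁻¹ *ᵥ b) = γ ⬝ᵥ x + γ ⬝ᵥ ((1 - α • M)⁻¹ *ᵥ d) := by
    rw [hbsplit, Matrix.mulVec_add, dotProduct_add, hinv]
  rw [this]
  have hnn : 0 ≤ γ ⬝ᵥ ((1 - α • M)⁻¹ *ᵥ d) := by
    apply Finset.sum_nonneg; intro i _
    exact mul_nonneg (hγ0 i) (inv_nonneg_vec α ⟨hα0, hα1⟩ M hM0 hM1 d hd0 i)
  linarith
end

section
/- Let S be a finite nonempty set, α ∈ (0,1), γ ∈ ℝ^S a probability vector (γ ≥ 0 componentwise, Σ_s γ(s) = 1), and let P, M ∈ ℝ^{S×S} be row-stochastic matrices. Set Z = P − M, and let Z^l ∈ ℝ^{S×S} be a matrix with Z^l(s,s') ≤ Z(s,s') and Z^l(s,s') ≤ 0 for all s, s'. Let c, c^l, c^u ∈ ℝ^S satisfy c^l ≤ c ≤ c^u componentwise, and define the vectors C_max(s) = c^u(s) + (α/(1−α)) · max_{s'} c^u(s') and C_min(s) = c^l(s) + (α/(1−α)) · min_{s'} c^l(s'). Then γᵀ (I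 − αP)⁻¹ c ≥ γᵀ (I − αM)⁻¹ ( c^l + α (Z − Z^l) C_min + α Z^l C_max ). -/
open Matrix
open scoped NNReal

section Aux

attribute [local instance] Matrix.linftyOpNormedRing Matrix.linftyOpNormedSpace

variable {S : Type*} [Fintype S] [DecidableEq S] [Nonempty S]

lemma stoch_norm_lt_one {α : ℝ} (hα : α ∈ Set.Ioo (0:ℝ) 1) (M : Matrix S S ℝ)
    (hM0 : ∀ s s', 0 ≤ M s s') (hM1 : ∀ s, ∑ s', M s s' = 1) :
    ‖α • M‖ < 1 := by
  have key : ((Finset.univ : Finset S).sup fun i => ∑ j, ‖(α • M) i j‖₊) ≤ α.toNNReal := by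
    apply Finset.sup_le
    intro i _
    rw [← NNReal.coe_le_coe, NNReal.coe_sum, Real.coe_toNNReal _ hα.1.le]
    have h : ∀ j : S, (‖(α • M) i j‖₊ : ℝ) = α * M i j := by
      intro j
      rw [coe_nnnorm, Matrix.smul_apply, smul_eq_mul,
        Real.norm_of_nonneg (mul_nonneg hα.1.le (hM0 i j))]
    rw [Finset.sum_congr rfl fun j _ => h j, ← Finset.mul_sum, hM1 i, mul_one]
  have h1 : ‖α • M‖ ≤ α := by
    rw [Matrix.linfty_opNorm_def]
    calc ((Finset.univ.sup fun i => ∑ j, ‖(α • M) i j‖₊ : ℝ≥0) : ℝ)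
        ≤ (α.toNNReal : ℝ) := NNReal.coe_le_coe.mpr key
      _ = α := Real.coe_toNNReal _ hα.1.le
  exact h1.trans_lt hα.2

lemma stoch_isUnit {α : ℝ} (hα : α ∈ Set.Ioo (0:ℝ) 1) (M : Matrix S S ℝ)
    (hM0 : ∀ s s', 0 ≤ M s s') (hM1 : ∀ s, ∑ s', M s s' = 1) :
    IsUnit (1 - α • M) := by
  haveI : CompleteSpace (Matrix S S ℝ) := FiniteDimensional.complete ℝ _
  exact isUnit_one_sub_of_norm_lt_one (stoch_norm_lt_one hα M hM0 hM1)

lemma pow_entry_nonneg {A : Matrix S S ℝ} (hA : ∀ i j, 0 ≤ A i j) :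
    ∀ (n : ℕ) (i j : S), 0 ≤ (A ^ n) i j := by
  intro n
  induction n with
  | zero =>
    intro i j
    rw [pow_zero]
    rw [Matrix.one_apply]
    split <;> norm_num
  | succ n ih =>
    intro i j
    rw [pow_succ, Matrix.mul_apply]
    exact Finset.sum_nonneg fun k _ => mul_nonneg (ih i k) (hA k j)

lemma stoch_inv_nonneg {α : ℝ} (hα : α ∈ Set.Ioo (0:ℝ) 1) (M : Matrix S S ℝ)
    (hM0 : ∀ s s', 0 ≤ M s s') (hM1 : ∀ s, ∑ s', M s s' = 1) (i j : S) :
    0 ≤ (1 - α • M)⁻¹ i j := by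
  haveI : CompleteSpace (Matrix S S ℝ) := FiniteDimensional.complete ℝ _
  have hn : ‖α • M‖ < 1 := stoch_norm_lt_one hα M hM0 hM1
  have hs : HasSum (fun n : ℕ => (α • M) ^ n) (Ring.inverse (1 - α • M)) :=
    hasSum_geom_series_inverse _ hn
  let f : Matrix S S ℝ →L[ℝ] ℝ :=
    LinearMap.mkContinuous (Matrix.entryLinearMap ℝ ℝ i j) 1 (by
      intro A
      rw [one_mul]
      have h1 : ‖A i j‖₊ ≤ ∑ j', ‖A i j'‖₊ :=
        Finset.single_le_sum (f := fun j' => ‖A i j'‖₊) (fun _ _ => zero_le)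
          (Finset.mem_univ j)
      have h2 : (∑ j', ‖A i j'‖₊) ≤ Finset.univ.sup fun i' => ∑ j', ‖A i' j'‖₊ :=
        Finset.le_sup (f := fun i' => ∑ j', ‖A i' j'‖₊) (Finset.mem_univ i)
      calc ‖(Matrix.entryLinearMap ℝ ℝ i j) A‖ = ((‖A i j‖₊ : ℝ≥0) : ℝ) := rfl
        _ ≤ ((Finset.univ.sup fun i' => ∑ j', ‖A i' j'‖₊ : ℝ≥0) : ℝ) :=
            NNReal.coe_le_coe.mpr (h1.trans h2)
        _ = ‖A‖ := (Matrix.linfty_opNorm_def A).symm)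
  have hs2 : HasSum (fun n : ℕ => ((α • M) ^ n) i j) ((Ring.inverse (1 - α • M)) i j) :=
    hs.mapL f
  have h0 : 0 ≤ (Ring.inverse (1 - α • M)) i j := by
    refine hasSum_le (fun n => ?_) hasSum_zero hs2
    exact pow_entry_nonneg (fun a b => mul_nonneg hα.1.le (hM0 a b)) n i j
  rwa [Matrix.nonsing_inv_eq_ringInverse]

end Aux

/-- Deterministic lower bound on the discounted cost `γᵀ(I − αP)⁻¹c` in terms of the
mean transition matrix `M`, the perturbation `Z = P − M` and its nonpositive
componentwise lower bound `Z^l` (inequality (4.17) of the paper). -/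
theorem discounted_cost_lower_bound
    {S : Type*} [Fintype S] [DecidableEq S] [Nonempty S]
    (α : ℝ) (hα : α ∈ Set.Ioo (0 : ℝ) 1)
    (γ : S → ℝ) (hγ0 : ∀ s, 0 ≤ γ s) (hγ1 : ∑ s, γ s = 1)
    (P M : Matrix S S ℝ)
    (hP0 : ∀ s s', 0 ≤ P s s') (hP1 : ∀ s, ∑ s', P s s' = 1)
    (hM0 : ∀ s s', 0 ≤ M s s') (hM1 : ∀ s, ∑ s', M s s' = 1)
    (Zl : Matrix S S ℝ)
    (hZl : ∀ s s', Zl s s' ≤ (P - M) s s') (hZl0 : ∀ s s', Zl s s' ≤ 0)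
    (c cl cu : S → ℝ) (hbd : ∀ s, cl s ≤ c s ∧ c s ≤ cu s)
    (Cmax Cmin : S → ℝ)
    (hCmax : ∀ s, Cmax s =
      cu s + α / (1 - α) * Finset.univ.sup' Finset.univ_nonempty cu)
    (hCmin : ∀ s, Cmin s =
      cl s + α / (1 - α) * Finset.univ.inf' Finset.univ_nonempty cl) :
    γ ⬝ᵥ ((1 - α • M)⁻¹ *ᵥ
        (cl + α • (((P - M) - Zl) *ᵥ Cmin) + α • (Zl *ᵥ Cmax)))
      ≤ γ ⬝ᵥ ((1 - α • P)⁻¹ *ᵥ c) := by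
  obtain ⟨hα0, hα1⟩ := hα
  have h1α : (0:ℝ) < 1 - α := by linarith
  have hAu : IsUnit (1 - α • P) := stoch_isUnit ⟨hα0, hα1⟩ P hP0 hP1
  have hBu : IsUnit (1 - α • M) := stoch_isUnit ⟨hα0, hα1⟩ M hM0 hM1
  set x : S → ℝ := (1 - α • P)⁻¹ *ᵥ c with hx
  have hAx : (1 - α • P) *ᵥ x = c := by
    rw [hx, Matrix.mulVec_mulVec,
      Matrix.mul_nonsing_inv _ ((1 - α • P).isUnit_iff_isUnit_det.mp hAu),
      Matrix.one_mulVec]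
  have hmv : ∀ (N : Matrix S S ℝ) (v : S → ℝ) (s : S),
      (N *ᵥ v) s = ∑ s', N s s' * v s' := by
    intro N v s; simp [Matrix.mulVec, dotProduct]
  have hxs : ∀ s, x s = c s + α * ∑ s', P s s' * x s' := by
    intro s
    have h := congrFun hAx s
    rw [Matrix.sub_mulVec, Matrix.one_mulVec, Matrix.smul_mulVec] at h
    simp only [Pi.sub_apply, Pi.smul_apply, smul_eq_mul] at h
    rw [hmv P x s] at h
    linarith
  -- upper bound on x
  set Ku : ℝ := Finset.univ.sup' Finset.univ_nonempty x with hKu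
  set Kl : ℝ := Finset.univ.inf' Finset.univ_nonempty x with hKl
  have hxKu : ∀ s, x s ≤ Ku := fun s => Finset.le_sup' x (Finset.mem_univ s)
  have hxKl : ∀ s, Kl ≤ x s := fun s => Finset.inf'_le x (Finset.mem_univ s)
  have hPKu : ∀ s, ∑ s', P s s' * x s' ≤ Ku := by
    intro s
    calc ∑ s', P s s' * x s' ≤ ∑ s', P s s' * Ku :=
          Finset.sum_le_sum fun s' _ => mul_le_mul_of_nonneg_left (hxKu s') (hP0 s s')
      _ = Ku := by rw [← Finset.sum_mul, hP1 s, one_mul]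
  have hPKl : ∀ s, Kl ≤ ∑ s', P s s' * x s' := by
    intro s
    calc Kl = ∑ s', P s s' * Kl := by rw [← Finset.sum_mul, hP1 s, one_mul]
      _ ≤ ∑ s', P s s' * x s' :=
          Finset.sum_le_sum fun s' _ => mul_le_mul_of_nonneg_left (hxKl s') (hP0 s s')
  have hKuB : Ku ≤ (Finset.univ.sup' Finset.univ_nonempty cu) / (1 - α) := by
    obtain ⟨s0, -, hs0⟩ := Finset.exists_mem_eq_sup' Finset.univ_nonempty x
    have hKux : Ku = x s0 := hs0
    have h1 : x s0 ≤ cu s0 + α * Ku := by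
      calc x s0 = c s0 + α * ∑ s', P s0 s' * x s' := hxs s0
        _ ≤ cu s0 + α * Ku := by
            have := hPKu s0
            have := (hbd s0).2
            nlinarith
    have h2 : cu s0 ≤ Finset.univ.sup' Finset.univ_nonempty cu :=
      Finset.le_sup' cu (Finset.mem_univ s0)
    rw [le_div_iff₀ h1α]
    nlinarith
  have hKlB : (Finset.univ.inf' Finset.univ_nonempty cl) / (1 - α) ≤ Kl := by
    obtain ⟨s0, -, hs0⟩ := Finset.exists_mem_eq_inf' Finset.univ_nonempty x
    have hKlx : Kl = x s0 := hs0
    have h1 : cl s0 + α * Kl ≤ x s0 := by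
      calc cl s0 + α * Kl ≤ c s0 + α * ∑ s', P s0 s' * x s' := by
            have := hPKl s0
            have := (hbd s0).1
            nlinarith
        _ = x s0 := (hxs s0).symm
    have h2 : Finset.univ.inf' Finset.univ_nonempty cl ≤ cl s0 :=
      Finset.inf'_le cl (Finset.mem_univ s0)
    rw [div_le_iff₀ h1α]
    nlinarith
  have hxCmax : ∀ s, x s ≤ Cmax s := by
    intro s
    rw [hCmax s, hxs s]
    have h1 := hPKu s
    have h2 : α * Ku ≤ α / (1 - α) * Finset.univ.sup' Finset.univ_nonempty cu := by
      rw [div_mul_eq_mul_div, mul_div_assoc]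
      exact mul_le_mul_of_nonneg_left hKuB hα0.le
    have := (hbd s).2
    nlinarith
  have hxCmin : ∀ s, Cmin s ≤ x s := by
    intro s
    rw [hCmin s, hxs s]
    have h1 := hPKl s
    have h2 : α / (1 - α) * Finset.univ.inf' Finset.univ_nonempty cl ≤ α * Kl := by
      rw [div_mul_eq_mul_div, mul_div_assoc]
      exact mul_le_mul_of_nonneg_left hKlB hα0.le
    have := (hbd s).1
    nlinarith
  -- componentwise comparison of the two input vectors
  have hvu : ∀ s, (cl + α • (((P - M) - Zl) *ᵥ Cmin) + α • (Zl *ᵥ Cmax)) s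
      ≤ (c + α • ((P - M) *ᵥ x)) s := by
    intro s
    simp only [Pi.add_apply, Pi.smul_apply, smul_eq_mul]
    rw [hmv _ Cmin s, hmv _ Cmax s, hmv _ x s]
    have key : (∑ s', ((P - M) - Zl) s s' * Cmin s') + (∑ s', Zl s s' * Cmax s')
        ≤ ∑ s', (P - M) s s' * x s' := by
      rw [← Finset.sum_add_distrib]
      apply Finset.sum_le_sum
      intro s' _
      have e1 : ((P - M) - Zl) s s' = (P - M) s s' - Zl s s' := by
        simp [Matrix.sub_apply]
      have h1 : ((P - M) - Zl) s s' * Cmin s' ≤ ((P - M) - Zl) s s' * x s' :=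
        mul_le_mul_of_nonneg_left (hxCmin s') (by rw [e1]; linarith [hZl s s'])
      have h2 : Zl s s' * Cmax s' ≤ Zl s s' * x s' :=
        mul_le_mul_of_nonpos_left (hxCmax s') (hZl0 s s')
      rw [e1] at h1 ⊢
      linarith
    have hc := (hbd s).1
    nlinarith
  -- the fixed point identity through M
  have hBx : (1 - α • M) *ᵥ x = c + α • ((P - M) *ᵥ x) := by
    funext s
    rw [Matrix.sub_mulVec, Matrix.one_mulVec, Matrix.smul_mulVec]
    simp only [Pi.sub_apply, Pi.add_apply, Pi.smul_apply, smul_eq_mul]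
    rw [hmv M x s, hmv _ x s]
    have hsum : ∑ s', (P - M) s s' * x s'
        = (∑ s', P s s' * x s') - ∑ s', M s s' * x s' := by
      rw [← Finset.sum_sub_distrib]
      exact Finset.sum_congr rfl fun s' _ => by simp [Matrix.sub_apply, sub_mul]
    rw [hsum]
    have := hxs s
    linarith
  have hxu : (1 - α • M)⁻¹ *ᵥ (c + α • ((P - M) *ᵥ x)) = x := by
    rw [← hBx, Matrix.mulVec_mulVec,
      Matrix.nonsing_inv_mul _ ((1 - α • M).isUnit_iff_isUnit_det.mp hBu),
      Matrix.one_mulVec]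
  -- main inequality
  calc γ ⬝ᵥ ((1 - α • M)⁻¹ *ᵥ (cl + α • (((P - M) - Zl) *ᵥ Cmin) + α • (Zl *ᵥ Cmax)))
      ≤ γ ⬝ᵥ ((1 - α • M)⁻¹ *ᵥ (c + α • ((P - M) *ᵥ x))) := by
        apply Finset.sum_le_sum
        intro s _
        apply mul_le_mul_of_nonneg_left _ (hγ0 s)
        rw [hmv _ _ s, hmv _ _ s]
        apply Finset.sum_le_sum
        intro s' _
        exact mul_le_mul_of_nonneg_left (hvu s')
          (stoch_inv_nonneg ⟨hα0, hα1⟩ M hM0 hM1 s s')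
    _ = γ ⬝ᵥ x := by rw [hxu]
    _ = γ ⬝ᵥ ((1 - α • P)⁻¹ *ᵥ c) := by rw [hx]
end
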